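/- arXiv:2605.30946 — 7 statements merged into one kernel-verified Lean document; each statement's English description precedes it below -/
import Mathlib

section
/- Let N = 10, let g satisfy condition (g), and let f = e^g. If (v₁, R₁) and (v₂, R₂) are regular solutions with first zero of the equation v'' + (9/r)·v' + f(v) = 0 and v₁(0) < v₂(0), then R₁ < R₂; that is, the first zero of the regular radial solution is strictly increasing in the initial value (Type II bifurcation). -/
/-- One-sided derivative on `[0, ∞)`. -/
noncomputable def dIci (g : ℝ → ℝ) : ℝ → ℝ := derivWithin g (Set.Ici 0)

/-- Condition (g): `g ∈ C³([0,∞))` with `g' > 0`, `g'' > 0`, `g'² - g'' ≥ 0`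
and `2 g''² - g' g''' > 0` on `[0, ∞)`. -/
def ConditionG (g : ℝ → ℝ) : Prop :=
  ContDiffOn ℝ 3 g (Set.Ici 0) ∧
  ∀ u : ℝ, 0 ≤ u →
    0 < dIci g u ∧
    0 < dIci (dIci g) u ∧
    0 ≤ (dIci g u) ^ 2 - dIci (dIci g) u ∧
    0 < 2 * (dIci (dIci g) u) ^ 2 - dIci g u * dIci (dIci (dIci g)) u

/-- `(v, R)` is a regular solution with first zero of
`v'' + ((N-1)/r) v' + f(v) = 0`: `R > 0`, `v ∈ C²([0,R])`, the equation holds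
for `0 < r < R`, `v'(0) = 0`, `v > 0` on `[0,R)`, and `v(R) = 0`. -/
def IsRegularSolutionWithFirstZero (N : ℕ) (f v : ℝ → ℝ) (R : ℝ) : Prop :=
  0 < R ∧ (∀ r : ℝ, 0 ≤ r → r < R → 0 < v r) ∧ v R = 0 ∧
  ∃ v' v'' : ℝ → ℝ,
    (∀ r ∈ Set.Icc (0:ℝ) R, HasDerivWithinAt v (v' r) (Set.Icc 0 R) r) ∧
    (∀ r ∈ Set.Icc (0:ℝ) R, HasDerivWithinAt v' (v'' r) (Set.Icc 0 R) r) ∧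
    ContinuousOn v'' (Set.Icc 0 R) ∧
    v' 0 = 0 ∧
    ∀ r ∈ Set.Ioo (0:ℝ) R, v'' r + ((N : ℝ) - 1) / r * v' r + f (v r) = 0

/-!
Write `f = exp ∘ g`. Along a regular solution `v`, the pair `E = r² f'(v)`, `S = r v' g'(v)`
starts at `(0, 0)` and never leaves the region `E + 4S < 8`, `S > -2`: on each boundary line the
equation, `g' > 0`, `g'' > 0` and `v' < 0` force the flow inward. Hence `r² f'(v) < 16`, the
Hardy constant `(N - 2)² / 4`.

If `R₂ ≤ R₁`, then `w = v₂ - v₁` is positive up to a first zero `ρ ≤ R₂`, and convexity of `f`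
together with the bound for `v₂` gives `r² w'' + 9 r w' + 16 w > 0` on `(0, ρ)`. Comparing with
`r⁻⁴`, which solves the Hardy equation `r² φ'' + 9 r φ' + 16 φ = 0`, the quantity `r (r⁴ w)'`
increases from `0`, so `r⁴ w` increases strictly from `0` and cannot vanish at `ρ`.
-/

open Set Filter Topology Real

theorem exists_first_zero {u : ℝ → ℝ} {a b : ℝ} (hab : a ≤ b) (hu : ContinuousOn u (Icc a b))
    (ha : 0 < u a) (hb : u b ≤ 0) : ∃ c ∈ Ioc a b, u c = 0 ∧ ∀ x ∈ Ico a c, 0 < u x := by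
  have hK : IsCompact (Icc a b ∩ u ⁻¹' Iic 0) :=
    isCompact_Icc.of_isClosed_subset (hu.preimage_isClosed_of_isClosed isClosed_Icc isClosed_Iic)
      inter_subset_left
  obtain ⟨c, ⟨hc, hcu⟩, hleast⟩ := hK.exists_isLeast ⟨b, right_mem_Icc.2 hab, hb⟩
  have hpos : ∀ x ∈ Ico a c, 0 < u x := fun x hx =>
    not_le.1 fun hx0 => hx.2.not_ge (hleast ⟨⟨hx.1, hx.2.le.trans hc.2⟩, hx0⟩)
  have hac : a < c := hc.1.lt_of_ne (by rintro rfl; exact (not_le.2 ha) hcu)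
  refine ⟨c, ⟨hac, hc.2⟩, le_antisymm hcu (not_lt.1 fun hneg => ?_), hpos⟩
  obtain ⟨x, hx, hx0⟩ := intermediate_value_Icc' hac.le (hu.mono (Icc_subset_Icc_right hc.2))
    ⟨hneg.le, ha.le⟩
  rcases hx.2.lt_or_eq with hxc | rfl
  · exact (hpos x ⟨hx.1, hxc⟩).ne' hx0
  · exact hneg.ne hx0

theorem forall_neg_of_frequently_nonneg_nhdsLT {u : ℝ → ℝ} {a b : ℝ}
    (hu : ContinuousOn u (Ioo a b)) (h_start : ∀ᶠ x in 𝓝[>] a, u x < 0)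
    (h_zero : ∀ t ∈ Ioo a b, u t = 0 → ∃ᶠ s in 𝓝[<] t, 0 ≤ u s) :
    ∀ t ∈ Ioo a b, u t < 0 := by
  intro t ht
  by_contra! hut
  obtain ⟨c, hc, hct⟩ := (h_start.and (Ioo_mem_nhdsGT ht.1)).exists
  obtain ⟨t₀, ht₀, hzero, hneg⟩ := exists_first_zero (u := -u) hct.2.le
    (hu.mono (Icc_subset_Ioo hct.1 ht.2)).neg (neg_pos.2 hc) (neg_nonpos.2 hut)
  refine h_zero t₀ ⟨hct.1.trans ht₀.1, ht₀.2.trans_lt ht.2⟩ (neg_eq_zero.1 hzero) ?_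
  filter_upwards [Ioo_mem_nhdsLT ht₀.1] with s hs
  exact not_le.2 (neg_pos.1 (hneg s ⟨hs.1.le, hs.2⟩))

theorem HasDerivAt.eventually_nhdsLT_lt {φ : ℝ → ℝ} {d x : ℝ} (h : HasDerivAt φ d x)
    (hd : 0 < d) : ∀ᶠ y in 𝓝[<] x, φ y < φ x := by
  filter_upwards [(hasDerivAt_iff_tendsto_slope_left_right.1 h).1.eventually
    (eventually_gt_nhds hd), self_mem_nhdsWithin] with y hy hyx
  exact (slope_pos_iff_gt hyx).1 hy

theorem forall_lt_and_lt_of_hasDerivAt {A S A' S' : ℝ → ℝ} {a b α β : ℝ}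
    (hA : ∀ t ∈ Ioo a b, HasDerivAt A (A' t) t) (hS : ∀ t ∈ Ioo a b, HasDerivAt S (S' t) t)
    (h_start : ∀ᶠ t in 𝓝[>] a, A t < α ∧ β < S t)
    (hA_exit : ∀ t ∈ Ioo a b, A t = α → A' t < 0)
    (hS_exit : ∀ t ∈ Ioo a b, S t = β → A t ≤ α → 0 < S' t) :
    ∀ t ∈ Ioo a b, A t < α ∧ β < S t := by
  have hAc : ContinuousOn A (Ioo a b) := fun t ht => (hA t ht).continuousAt.continuousWithinAt
  have hSc : ContinuousOn S (Ioo a b) := fun t ht => (hS t ht).continuousAt.continuousWithinAt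
  have key := forall_neg_of_frequently_nonneg_nhdsLT (u := fun t => max (A t - α) (β - S t))
    (ContinuousOn.sup (hAc.sub continuousOn_const) (continuousOn_const.sub hSc))
    (h_start.mono fun t ht => max_lt (sub_neg.2 ht.1) (sub_neg.2 ht.2)) fun t ht h0 => ?_
  · intro t ht
    have := max_lt_iff.1 (key t ht)
    exact ⟨sub_neg.1 this.1, sub_neg.1 this.2⟩
  · rcases max_choice (A t - α) (β - S t) with hmax | hmax <;> rw [hmax] at h0
    · refine (((hA t ht).neg.eventually_nhdsLT_lt (neg_pos.2 (hA_exit t ht (by linarith)))).mono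
        fun s hs => le_max_of_le_left ?_).frequently
      linarith [show -A s < -A t from hs]
    · have hAt : A t ≤ α := by linarith [le_max_left (A t - α) (β - S t)]
      refine (((hS t ht).eventually_nhdsLT_lt (hS_exit t ht (by linarith) hAt)).mono
        fun s hs => le_max_of_le_right ?_).frequently
      linarith

theorem hasDerivAt_pow_mul {p : ℝ → ℝ} {d r : ℝ} (n : ℕ) (hr : r ≠ 0) (h : HasDerivAt p d r) :
    HasDerivAt (fun s => s ^ n * p s) (r ^ n * (r * d + n * p r) / r) r := by
  refine ((hasDerivAt_pow n r).mul h).congr_deriv ?_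
  rcases n with _ | n
  · field_simp
    simp
  · simp only [Nat.add_sub_cancel]
    field_simp
    push_cast
    ring

theorem neg_of_mul_deriv_add_neg {p p' : ℝ → ℝ} {R : ℝ} (n : ℕ) (hp : ContinuousOn p (Icc 0 R))
    (hp0 : p 0 = 0) (hd : ∀ r ∈ Ioo 0 R, HasDerivAt p (p' r) r)
    (hneg : ∀ r ∈ Ioo 0 R, r * p' r + n * p r < 0) : ∀ r ∈ Ioc 0 R, p r < 0 := by
  have hanti : StrictAntiOn (fun s => s ^ n * p s) (Icc 0 R) := by
    refine strictAntiOn_of_deriv_neg (convex_Icc 0 R) ((continuousOn_pow n).mul hp)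
      fun r hr => ?_
    rw [interior_Icc] at hr
    rw [(hasDerivAt_pow_mul n hr.1.ne' (hd r hr)).deriv]
    exact div_neg_of_neg_of_pos (mul_neg_of_pos_of_neg (pow_pos hr.1 n) (hneg r hr)) hr.1
  intro r hr
  have := hanti (left_mem_Icc.2 (hr.1.le.trans hr.2)) ⟨hr.1.le, hr.2⟩ hr.1
  simp only [hp0, mul_zero] at this
  exact neg_of_mul_neg_right this (pow_nonneg hr.1.le n)

theorem pos_at_of_radial_hardy_pos {w w' w'' : ℝ → ℝ} {ρ : ℝ} (k : ℕ) (hk : 0 < k) (hρ : 0 < ρ)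
    (hw : ContinuousOn w (Icc 0 ρ)) (hw' : ContinuousOn w' (Icc 0 ρ))
    (hwd : ∀ r ∈ Ioo 0 ρ, HasDerivAt w (w' r) r) (hw'd : ∀ r ∈ Ioo 0 ρ, HasDerivAt w' (w'' r) r)
    (hL : ∀ r ∈ Ioo 0 ρ, 0 < r ^ 2 * w'' r + (2 * k + 1) * r * w' r + k ^ 2 * w r) :
    0 < w ρ := by
  -- `rᵏ m = r (rᵏ w)'` is the Wronskian of `w` with `r⁻ᵏ`, a solution of the Hardy equation.
  set m : ℝ → ℝ := fun r => r * w' r + k * w r with hm_def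
  have hmd : ∀ r ∈ Ioo 0 ρ, HasDerivAt m (w' r + r * w'' r + k * w' r) r := fun r hr =>
    (((hasDerivAt_id' r).mul (hw'd r hr)).add ((hwd r hr).const_mul (k : ℝ))).congr_deriv
      (by ring)
  have hQ : StrictMonoOn (fun r => r ^ k * m r) (Icc 0 ρ) := by
    refine strictMonoOn_of_deriv_pos (convex_Icc 0 ρ)
      ((continuousOn_pow k).mul ((continuousOn_id.mul hw').add (continuousOn_const.mul hw)))
      fun r hr => ?_
    rw [interior_Icc] at hr
    rw [(hasDerivAt_pow_mul k hr.1.ne' (hmd r hr)).deriv]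
    have : r * (w' r + r * w'' r + k * w' r) + k * m r =
        r ^ 2 * w'' r + (2 * k + 1) * r * w' r + k ^ 2 * w r := by
      simp only [hm_def]; ring
    rw [this]
    exact div_pos (mul_pos (pow_pos hr.1 k) (hL r hr)) hr.1
  have hm : ∀ r ∈ Ioo 0 ρ, 0 < m r := fun r hr => by
    have := hQ (left_mem_Icc.2 hρ.le) (Ioo_subset_Icc_self hr) hr.1
    simp only [zero_pow hk.ne', zero_mul] at this
    exact pos_of_mul_pos_right this (pow_nonneg hr.1.le k)
  have hP : StrictMonoOn (fun r => r ^ k * w r) (Icc 0 ρ) := by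
    refine strictMonoOn_of_deriv_pos (convex_Icc 0 ρ) ((continuousOn_pow k).mul hw)
      fun r hr => ?_
    rw [interior_Icc] at hr
    rw [(hasDerivAt_pow_mul k hr.1.ne' (hwd r hr)).deriv]
    exact div_pos (mul_pos (pow_pos hr.1 k) (hm r hr)) hr.1
  have := hP (left_mem_Icc.2 hρ.le) (right_mem_Icc.2 hρ.le) hρ
  simp only [zero_pow hk.ne', zero_mul] at this
  exact pos_of_mul_pos_right this (pow_nonneg hρ.le k)

/- In the next two lemmas `p = v' r`, `q = v'' r`, `a = g' (v r)`, `b = g'' (v r)` and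
`e = exp (g (v r))`, so that `E = r² a e`, `S = r p a` and `hq` is the equation. The conclusions
are the signs of `(E + 4S)'` and of `S'` on the two boundary lines of the invariant region. -/

theorem upper_exit_deriv_neg {r p q a b e : ℝ} (hr : 0 < r) (hp : p < 0) (ha : 0 < a)
    (hb : 0 < b) (hq : r * q + 9 * p = -(r * e)) (hA : r ^ 2 * (a * e) + 4 * (r * p * a) = 8) :
    2 * r * (a * e) + r ^ 2 * p * e * (b + a ^ 2) + 4 * (p * a + r * q * a + r * p ^ 2 * b) <
      0 := by
  have hre : 0 < r * e + 4 * p := by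
    have : r * a * (r * e + 4 * p) = 8 := by linear_combination hA
    exact pos_of_mul_pos_right (a := r * a) (by linarith) (by positivity)
  have key : r * (2 * r * (a * e) + r ^ 2 * p * e * (b + a ^ 2)
      + 4 * (p * a + r * q * a + r * p ^ 2 * b)) =
      -4 * (r * p * a + 2) ^ 2 + b * r ^ 2 * p * (r * e + 4 * p) := by
    linear_combination (r * p * a - 2) * hA + 4 * r * a * hq
  have : b * r ^ 2 * p * (r * e + 4 * p) < 0 :=
    mul_neg_of_neg_of_pos (mul_neg_of_pos_of_neg (by positivity) hp) hre
  exact neg_of_mul_neg_right (by rw [key]; nlinarith [sq_nonneg (r * p * a + 2)]) hr.le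

theorem lower_exit_deriv_pos {r p q a b e : ℝ} (hr : 0 < r) (hb : 0 < b)
    (hq : r * q + 9 * p = -(r * e)) (hS : r * p * a = -2)
    (hA : r ^ 2 * (a * e) + 4 * (r * p * a) ≤ 8) :
    0 < p * a + r * q * a + r * p ^ 2 * b := by
  have hp : p ≠ 0 := by rintro rfl; norm_num at hS
  have key :
      r * (p * a + r * q * a + r * p ^ 2 * b) = 16 - r ^ 2 * (a * e) + r ^ 2 * p ^ 2 * b := by
    linear_combination (-8) * hS + r * a * hq
  have : 0 < r ^ 2 * p ^ 2 * b := by positivity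
  exact pos_of_mul_pos_right (by rw [key]; linarith) hr.le

theorem dIci_eventuallyEq_deriv (φ : ℝ → ℝ) {u : ℝ} (hu : 0 < u) : dIci φ =ᶠ[𝓝 u] deriv φ := by
  filter_upwards [Ioi_mem_nhds hu] with x hx using derivWithin_of_mem_nhds (Ici_mem_nhds hx)

namespace ConditionG

variable {g : ℝ → ℝ} {u : ℝ}

theorem contDiffAt (hg : ConditionG g) (hu : 0 < u) : ContDiffAt ℝ 3 g u :=
  hg.1.contDiffAt (Ici_mem_nhds hu)

theorem hasDerivAt (hg : ConditionG g) (hu : 0 < u) : HasDerivAt g (deriv g u) u :=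
  ((hg.contDiffAt hu).differentiableAt (by norm_num)).hasDerivAt

theorem hasDerivAt_deriv (hg : ConditionG g) (hu : 0 < u) :
    HasDerivAt (deriv g) (deriv (deriv g) u) u :=
  (((hg.contDiffAt hu).derivWithin (m := 2) (by norm_num)).differentiableAt
    (by norm_num)).hasDerivAt

theorem deriv_pos (hg : ConditionG g) (hu : 0 < u) : 0 < deriv g u :=
  (dIci_eventuallyEq_deriv g hu).eq_of_nhds ▸ (hg.2 u hu.le).1

theorem deriv_deriv_pos (hg : ConditionG g) (hu : 0 < u) : 0 < deriv (deriv g) u := by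
  have h := (hg.2 u hu.le).2.1
  rwa [dIci, derivWithin_of_mem_nhds (Ici_mem_nhds hu),
    (dIci_eventuallyEq_deriv g hu).deriv_eq] at h

theorem convexOn_exp_comp (hg : ConditionG g) : ConvexOn ℝ (Ioi 0) fun u => exp (g u) := by
  refine convexOn_of_hasDerivWithinAt2_nonneg (convex_Ioi 0)
    (f' := fun u => deriv g u * exp (g u))
    (f'' := fun u => (deriv (deriv g) u + deriv g u ^ 2) * exp (g u))
    (fun u hu => (hg.hasDerivAt hu).exp.continuousAt.continuousWithinAt) ?_ ?_ ?_ <;>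
    simp only [interior_Ioi]
  · exact fun u hu => ((hg.hasDerivAt hu).exp.congr_deriv (mul_comm _ _)).hasDerivWithinAt
  · exact fun u hu => (((hg.hasDerivAt_deriv hu).mul (hg.hasDerivAt hu).exp).congr_deriv
      (by ring)).hasDerivWithinAt
  · exact fun u hu => by have := hg.deriv_deriv_pos hu; positivity

theorem sq_mul_exp_comp_sub_lt (hg : ConditionG g) {x y r : ℝ} (hx : 0 < x) (hxy : x < y)
    (hE : r ^ 2 * (deriv g y * exp (g y)) < 16) :
    r ^ 2 * (exp (g y) - exp (g x)) < 16 * (y - x) := by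
  have hy : 0 < y := hx.trans hxy
  have hslope := hg.convexOn_exp_comp.slope_le_of_hasDerivAt hx hy hxy
    ((hg.hasDerivAt hy).exp.congr_deriv (mul_comm _ _))
  rw [slope_def_field, div_le_iff₀ (sub_pos.2 hxy)] at hslope
  calc r ^ 2 * (exp (g y) - exp (g x)) ≤ r ^ 2 * (deriv g y * exp (g y)) * (y - x) := by
        rw [mul_assoc]; exact mul_le_mul_of_nonneg_left hslope (sq_nonneg r)
    _ < 16 * (y - x) := mul_lt_mul_of_pos_right hE (sub_pos.2 hxy)

variable {v v' : ℝ → ℝ} {r p q : ℝ}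

theorem hasDerivAt_sq_mul_deriv_mul_exp_comp (hg : ConditionG g) (hv : 0 < v r)
    (hvd : HasDerivAt v p r) :
    HasDerivAt (fun s => s ^ 2 * (deriv g (v s) * exp (g (v s))))
      (2 * r * (deriv g (v r) * exp (g (v r))) +
        r ^ 2 * p * exp (g (v r)) * (deriv (deriv g) (v r) + deriv g (v r) ^ 2)) r :=
  ((hasDerivAt_pow 2 r).mul (((hg.hasDerivAt_deriv hv).comp r hvd).mul
    ((hg.hasDerivAt hv).comp r hvd).exp)).congr_deriv
    (by simp only [Function.comp_apply, Pi.mul_apply]; push_cast; ring)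

theorem hasDerivAt_mul_mul_deriv_comp (hg : ConditionG g) (hv : 0 < v r)
    (hvd : HasDerivAt v (v' r) r) (hv'd : HasDerivAt v' q r) :
    HasDerivAt (fun s => s * v' s * deriv g (v s))
      (v' r * deriv g (v r) + r * q * deriv g (v r) + r * v' r ^ 2 * deriv (deriv g) (v r)) r :=
  (((hasDerivAt_id' r).mul hv'd).mul ((hg.hasDerivAt_deriv hv).comp r hvd)).congr_deriv
    (by simp only [Function.comp_apply, Pi.mul_apply]; ring)

theorem eventually_nhdsGT_zero_invariantRegion (hg : ConditionG g) (hv0 : 0 < v 0)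
    (hv : Tendsto v (𝓝[>] 0) (𝓝 (v 0))) (hv' : Tendsto v' (𝓝[>] 0) (𝓝 0)) :
    ∀ᶠ s in 𝓝[>] 0,
      s ^ 2 * (deriv g (v s) * exp (g (v s))) + 4 * (s * v' s * deriv g (v s)) < 8 ∧
        -2 < s * v' s * deriv g (v s) := by
  have hid : Tendsto (fun s : ℝ => s) (𝓝[>] 0) (𝓝 0) := nhdsWithin_le_nhds
  have ha := (hg.hasDerivAt_deriv hv0).continuousAt.tendsto.comp hv
  have he := ((hg.hasDerivAt hv0).continuousAt.tendsto.comp hv).rexp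
  have hS : Tendsto (fun s => s * v' s * deriv g (v s)) (𝓝[>] 0) (𝓝 0) := by
    simpa using (hid.mul hv').mul ha
  have hE : Tendsto (fun s => s ^ 2 * (deriv g (v s) * exp (g (v s)))) (𝓝[>] 0) (𝓝 0) := by
    simpa using (hid.pow 2).mul (ha.mul he)
  exact ((hE.add (hS.const_mul 4)).eventually_lt_const (by norm_num)).and
    (hS.eventually_const_lt (by norm_num))

end ConditionG

namespace IsRegularSolutionWithFirstZero

variable {g f v : ℝ → ℝ} {R : ℝ}

theorem exists_hasDerivAt_exp (hf : ∀ u, 0 ≤ u → f u = exp (g u))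
    (h : IsRegularSolutionWithFirstZero 10 f v R) :
    ∃ v' v'' : ℝ → ℝ, ContinuousOn v (Icc 0 R) ∧ ContinuousOn v' (Icc 0 R) ∧ v' 0 = 0 ∧
      ∀ r ∈ Ioo 0 R, HasDerivAt v (v' r) r ∧ HasDerivAt v' (v'' r) r ∧
        r * v'' r + 9 * v' r = -(r * exp (g (v r))) := by
  obtain ⟨-, hpos, -, v', v'', hv, hv', -, hv'0, hode⟩ := h
  refine ⟨v', v'', fun r hr => (hv r hr).continuousWithinAt,
    fun r hr => (hv' r hr).continuousWithinAt, hv'0, fun r hr =>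
      ⟨(hv r (Ioo_subset_Icc_self hr)).hasDerivAt (Icc_mem_nhds hr.1 hr.2),
        (hv' r (Ioo_subset_Icc_self hr)).hasDerivAt (Icc_mem_nhds hr.1 hr.2), ?_⟩⟩
  have h := hode r hr
  rw [hf _ (hpos r hr.1.le hr.2).le] at h
  have := hr.1.ne'
  push_cast at h
  field_simp at h
  linear_combination h

theorem sq_mul_deriv_mul_exp_lt (hg : ConditionG g) (hf : ∀ u, 0 ≤ u → f u = exp (g u))
    (h : IsRegularSolutionWithFirstZero 10 f v R) :
    ∀ r ∈ Ioo 0 R, r ^ 2 * (deriv g (v r) * exp (g (v r))) < 16 := by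
  obtain ⟨v', v'', hvc, hv'c, hv'0, hv⟩ := h.exists_hasDerivAt_exp hf
  have hvpos : ∀ r ∈ Ioo 0 R, 0 < v r := fun r hr => h.2.1 r hr.1.le hr.2
  have hv'neg : ∀ r ∈ Ioo 0 R, v' r < 0 := fun r hr =>
    neg_of_mul_deriv_add_neg 9 hv'c hv'0 (fun s hs => (hv s hs).2.1)
      (fun s hs => by
        push_cast
        rw [(hv s hs).2.2]
        exact neg_neg_of_pos (mul_pos hs.1 (exp_pos _)))
      r (Ioo_subset_Ioc_self hr)
  have h0 : (0 : ℝ) ∈ Icc 0 R := left_mem_Icc.2 h.1.le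
  have hstart := hg.eventually_nhdsGT_zero_invariantRegion (h.2.1 0 le_rfl h.1)
    ((hvc 0 h0).mono_of_mem_nhdsWithin (Icc_mem_nhdsGT h.1))
    (by simpa [ContinuousWithinAt, hv'0] using
      (hv'c 0 h0).mono_of_mem_nhdsWithin (Icc_mem_nhdsGT h.1))
  have hS := fun r hr =>
    hg.hasDerivAt_mul_mul_deriv_comp (hvpos r hr) (hv r hr).1 (hv r hr).2.1
  have hinv := forall_lt_and_lt_of_hasDerivAt
    (fun r hr => (hg.hasDerivAt_sq_mul_deriv_mul_exp_comp (hvpos r hr) (hv r hr).1).add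
      ((hS r hr).const_mul 4)) hS hstart
    (fun r hr hAr => upper_exit_deriv_neg hr.1 (hv'neg r hr) (hg.deriv_pos (hvpos r hr))
      (hg.deriv_deriv_pos (hvpos r hr)) (hv r hr).2.2 hAr)
    (fun r hr hSr hAr =>
      lower_exit_deriv_pos hr.1 (hg.deriv_deriv_pos (hvpos r hr)) (hv r hr).2.2 hSr hAr)
  intro r hr
  obtain ⟨hAr, hSr⟩ := hinv r hr
  simp only [Pi.add_apply] at hAr
  linarith

end IsRegularSolutionWithFirstZero

/-- For `N = 10`, `g` satisfying condition (g) and `f = e^g`, the first zero of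
the regular radial solution of `v'' + (9/r) v' + f(v) = 0` is strictly
increasing in the initial value `v(0)` (Type II bifurcation). -/
theorem first_zero_strictly_increasing_exp_g
    (g : ℝ → ℝ) (hg : ConditionG g) (f : ℝ → ℝ)
    (hf : ∀ u : ℝ, 0 ≤ u → f u = Real.exp (g u))
    (v₁ v₂ : ℝ → ℝ) (R₁ R₂ : ℝ)
    (h₁ : IsRegularSolutionWithFirstZero 10 f v₁ R₁)
    (h₂ : IsRegularSolutionWithFirstZero 10 f v₂ R₂)
    (h0 : v₁ 0 < v₂ 0) :
    R₁ < R₂ := by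
  by_contra! hR
  have hE := h₂.sq_mul_deriv_mul_exp_lt hg hf
  obtain ⟨v₁', v₁'', hv₁c, hv₁'c, -, hv₁⟩ := h₁.exists_hasDerivAt_exp hf
  obtain ⟨v₂', v₂'', hv₂c, hv₂'c, -, hv₂⟩ := h₂.exists_hasDerivAt_exp hf
  have hwc := hv₂c.sub (hv₁c.mono (Icc_subset_Icc_right hR))
  have hw'c := hv₂'c.sub (hv₁'c.mono (Icc_subset_Icc_right hR))
  have hv₁R₂ : 0 ≤ v₁ R₂ := by
    rcases hR.lt_or_eq with hlt | rfl
    · exact (h₁.2.1 R₂ h₂.1.le hlt).le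
    · exact h₁.2.2.1.ge
  obtain ⟨ρ, hρ, hwρ, hwpos⟩ := exists_first_zero (u := v₂ - v₁) h₂.1.le
    hwc (sub_pos.2 h0) (by simp [h₂.2.2.1, hv₁R₂])
  have hIcc : Icc 0 ρ ⊆ Icc 0 R₂ := Icc_subset_Icc_right hρ.2
  have hIoo₂ : Ioo 0 ρ ⊆ Ioo 0 R₂ := Ioo_subset_Ioo_right hρ.2
  have hIoo₁ : Ioo 0 ρ ⊆ Ioo 0 R₁ := Ioo_subset_Ioo_right (hρ.2.trans hR)
  refine hwρ.not_gt (pos_at_of_radial_hardy_pos (w' := v₂' - v₁') (w'' := v₂'' - v₁'') 4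
    four_pos hρ.1 (hwc.mono hIcc) (hw'c.mono hIcc)
    (fun r hr => (hv₂ r (hIoo₂ hr)).1.sub (hv₁ r (hIoo₁ hr)).1)
    (fun r hr => (hv₂ r (hIoo₂ hr)).2.1.sub (hv₁ r (hIoo₁ hr)).2.1) fun r hr => ?_)
  have hcmp := hg.sq_mul_exp_comp_sub_lt (h₁.2.1 r hr.1.le (hIoo₁ hr).2)
    (sub_pos.1 (hwpos r (Ioo_subset_Ico_self hr))) (hE r (hIoo₂ hr))
  simp only [Pi.sub_apply]
  push_cast
  linear_combination hcmp - r * (hv₂ r (hIoo₂ hr)).2.2 + r * (hv₁ r (hIoo₁ hr)).2.2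
end

section
/- Let N ≥ 3 be an integer and let f ∈ C²([0,∞)) with f > 0, f' > 0, f'' > 0 on [0,∞). Let R > 0 and let v̂ ∈ C²((0,R]) satisfy: v̂(r) → ∞ and |v̂'(r)| → ∞ as r → 0⁺; v̂(r) > 0 for 0 < r < R; v̂(R) = 0; and v̂'' + ((N−1)/r)·v̂' + f(v̂) ≥ 0 on (0,R]. Let Q ∈ C((0,R]) with Q(r) > 0, and let Z ∈ C²((0,R]) be positive and satisfy Z'' + ((N−1)/r)·Z' + Q·Z = 0 on (0,R]. Assume f'(v̂(r)) ≤ Q(r) for 0 < r ≤ R, and that r^{N−1}·v̂(r)·Z'(r) → 0 and r^{N−1}·v̂'(r)·Z(r) → 0 as r → 0⁺. Then: (i) every regular solution (v, R₀) with first zero of v'' + ((N−1)/r)·v' + f(v) = 0 satisfies R₀ < R and v(r) < v̂(r) for 0 < r ≤ R₀; and (ii) if (v₁, R₁) and (v₂, R₂) are two such regular solutions with v₁(0) < v₂(0), then v₁(r) < v₂(r) for 0 ≤ r ≤ R₁, and hence R₁ < R₂. -/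
open Set Filter Topology

theorem StrictMonoOn.strictConvexOn_of_hasDerivWithinAt {D : Set ℝ} {f f' : ℝ → ℝ}
    (hf' : StrictMonoOn f' D) (hD : Convex ℝ D) (hf : ∀ x ∈ D, HasDerivWithinAt f (f' x) D x) :
    StrictConvexOn ℝ D f := by
  refine StrictMonoOn.strictConvexOn_of_deriv hD (fun x hx => (hf x hx).continuousWithinAt) ?_
  refine (hf'.mono interior_subset).congr fun x hx => ?_
  exact ((hf x (interior_subset hx)).hasDerivAt (mem_interior_iff_mem_nhds.mp hx)).deriv.symm

theorem StrictConvexOn.sub_lt_mul_sub_of_hasDerivWithinAt {S : Set ℝ} {f : ℝ → ℝ} {d p q : ℝ}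
    (hfc : StrictConvexOn ℝ S f) (hp : p ∈ S) (hq : q ∈ S) (hpq : p < q)
    (hd : HasDerivWithinAt f d S q) : f q - f p < d * (q - p) := by
  have := hfc.slope_lt_of_hasDerivWithinAt hp hq hpq hd
  rwa [slope_def_field, div_lt_iff₀ (sub_pos.2 hpq)] at this

theorem tendsto_zero_of_tendsto_mul_of_tendsto_abs_atTop {α : Type*} {l : Filter α}
    {a b : α → ℝ} (hab : Tendsto (fun x => a x * b x) l (𝓝 0))
    (hb : Tendsto (fun x => |b x|) l atTop) : Tendsto a l (𝓝 0) := by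
  rw [tendsto_zero_iff_abs_tendsto_zero]
  refine (hab.abs.div_atTop hb).congr' ?_
  filter_upwards [hb.eventually_gt_atTop 0] with x hx
  rw [abs_mul, mul_div_cancel_right₀ _ hx.ne']
  rfl

theorem StrictMonoOn.lt_of_tendsto_nhdsGT {g : ℝ → ℝ} {a b l : ℝ} (hg : StrictMonoOn g (Ioc a b))
    (hab : a < b) (hl : Tendsto g (𝓝[>] a) (𝓝 l)) : l < g b := by
  have hc : (a + b) / 2 ∈ Ioo a b := ⟨by linarith, by linarith⟩
  have hlc : l ≤ g ((a + b) / 2) := by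
    refine le_of_tendsto hl ?_
    filter_upwards [Ioo_mem_nhdsGT hc.1] with s hs
    exact (hg ⟨hs.1, (hs.2.trans hc.2).le⟩ (Ioo_subset_Ioc_self hc) hs.2).le
  exact hlc.trans_lt (hg (Ioo_subset_Ioc_self hc) (right_mem_Ioc.2 hab) hc.2)

theorem HasDerivWithinAt.nonpos_of_pos_of_eq_zero {w : ℝ → ℝ} {d a b : ℝ} (hab : a < b)
    (hd : HasDerivWithinAt w d (Ioc a b) b) (hb : w b = 0) (hpos : ∀ r ∈ Ioo a b, 0 < w r) :
    d ≤ 0 := by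
  have hslope : Tendsto (slope w b) (𝓝[Ioo a b] b) (𝓝 d) :=
    (hasDerivWithinAt_iff_tendsto_slope.mp hd).mono_left
      (nhdsWithin_mono _ fun x hx => ⟨Ioo_subset_Ioc_self hx, hx.2.ne⟩)
  have : (𝓝[Ioo a b] b).NeBot := by rw [nhdsWithin_Ioo_eq_nhdsLT hab]; infer_instance
  refine le_of_tendsto hslope ?_
  filter_upwards [self_mem_nhdsWithin] with x hx
  rw [slope_def_field, hb, sub_zero]
  exact div_nonpos_of_nonneg_of_nonpos (hpos x hx).le (by linarith [hx.2])

theorem ContinuousOn.exists_first_zero {g : ℝ → ℝ} {a c : ℝ} (hg : ContinuousOn g (Ioc a c))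
    (hac : a < c) (hnear : ∀ᶠ r in 𝓝[>] a, 0 < g r) (hc : g c ≤ 0) :
    ∃ r₁ ∈ Ioc a c, g r₁ = 0 ∧ ∀ r ∈ Ioo a r₁, 0 < g r := by
  obtain ⟨δ, haδ, hδ⟩ := (nhdsGT_basis a).eventually_iff.mp hnear
  have hδc : δ ≤ c := by
    by_contra! h
    exact (hδ ⟨hac, h⟩).not_ge hc
  obtain ⟨m, ham, hmδ⟩ := exists_between haδ
  set S := Icc m c ∩ g ⁻¹' Iic 0
  have hS : IsClosed S :=
    (hg.mono fun x hx => ⟨ham.trans_le hx.1, hx.2⟩).preimage_isClosed_of_isClosed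
      isClosed_Icc isClosed_Iic
  have hSbdd : BddBelow S := ⟨m, fun x hx => hx.1.1⟩
  have hr₁ : sInf S ∈ S := hS.csInf_mem ⟨c, ⟨hmδ.le.trans hδc, le_rfl⟩, hc⟩ hSbdd
  have hr₁a : a < sInf S := ham.trans_le hr₁.1.1
  have hbelow : ∀ r ∈ Ioo a (sInf S), 0 < g r := by
    intro r hr
    rcases lt_or_ge r δ with hrδ | hδr
    · exact hδ ⟨hr.1, hrδ⟩
    · by_contra! hgr
      exact (csInf_le hSbdd ⟨⟨hmδ.le.trans hδr, hr.2.le.trans hr₁.1.2⟩, hgr⟩).not_gt hr.2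
  have : (𝓝[Ioo a (sInf S)] sInf S).NeBot := by
    rw [nhdsWithin_Ioo_eq_nhdsLT hr₁a]; infer_instance
  have hlim : Tendsto g (𝓝[Ioo a (sInf S)] sInf S) (𝓝 (g (sInf S))) :=
    (hg _ ⟨hr₁a, hr₁.1.2⟩).mono fun x hx => ⟨hx.1, hx.2.le.trans hr₁.1.2⟩
  have hge : 0 ≤ g (sInf S) :=
    ge_of_tendsto hlim (eventually_nhdsWithin_of_forall fun r hr => (hbelow r hr).le)
  exact ⟨sInf S, ⟨hr₁a, hr₁.1.2⟩, le_antisymm hr₁.2 hge, hbelow⟩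

def weightedWronskian (k : ℕ) (Z Z' w w' : ℝ → ℝ) (r : ℝ) : ℝ :=
  r ^ k * (Z r * w' r - w r * Z' r)

section WeightedWronskian

variable {k : ℕ} {Z Z' Z'' w w' w'' : ℝ → ℝ}

theorem weightedWronskian_sub {w₁ w₁' w₂ w₂' : ℝ → ℝ} :
    weightedWronskian k Z Z' (fun r => w₁ r - w₂ r) (fun r => w₁' r - w₂' r) =
      fun r => weightedWronskian k Z Z' w₁ w₁' r - weightedWronskian k Z Z' w₂ w₂' r := by
  funext r
  simp only [weightedWronskian]
  ring

theorem tendsto_weightedWronskian_of_tendsto {l : Filter ℝ} {a a' : ℝ}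
    (hZ : Tendsto (fun r => r ^ k * Z r) l (𝓝 0)) (hZ' : Tendsto (fun r => r ^ k * Z' r) l (𝓝 0))
    (hw : Tendsto w l (𝓝 a)) (hw' : Tendsto w' l (𝓝 a')) :
    Tendsto (weightedWronskian k Z Z' w w') l (𝓝 0) := by
  simpa using ((hZ.mul hw').sub (hZ'.mul hw)).congr fun r => by
    simp only [weightedWronskian]; ring

theorem hasDerivWithinAt_weightedWronskian {s : Set ℝ} {x q : ℝ} (hx : x ≠ 0)
    (hZ : HasDerivWithinAt Z (Z' x) s x) (hZ' : HasDerivWithinAt Z' (Z'' x) s x)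
    (hw : HasDerivWithinAt w (w' x) s x) (hw' : HasDerivWithinAt w' (w'' x) s x)
    (hZeq : Z'' x + k / x * Z' x + q * Z x = 0) :
    HasDerivWithinAt (weightedWronskian k Z Z' w w')
      (x ^ k * Z x * (w'' x + k / x * w' x + q * w x)) s x := by
  refine ((hasDerivAt_pow k x).hasDerivWithinAt.mul ((hZ.mul hw').sub (hw.mul hZ'))).congr_deriv ?_
  rw [show Z'' x = -(k / x * Z' x) - q * Z x by linarith]
  simp only [Pi.sub_apply, Pi.mul_apply]
  rcases k with _ | k
  · simp only [pow_zero, CharP.cast_eq_zero, zero_div, zero_mul]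
    ring
  · simp only [Nat.add_sub_cancel, pow_succ]
    field_simp
    push_cast
    ring

theorem strictMonoOn_weightedWronskian {Q : ℝ → ℝ} {b : ℝ}
    (hZ : ∀ r ∈ Ioc 0 b, HasDerivWithinAt Z (Z' r) (Ioc 0 b) r)
    (hZ' : ∀ r ∈ Ioc 0 b, HasDerivWithinAt Z' (Z'' r) (Ioc 0 b) r)
    (hw : ∀ r ∈ Ioc 0 b, HasDerivWithinAt w (w' r) (Ioc 0 b) r)
    (hw' : ∀ r ∈ Ioc 0 b, HasDerivWithinAt w' (w'' r) (Ioc 0 b) r)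
    (hZpos : ∀ r ∈ Ioo 0 b, 0 < Z r)
    (hZeq : ∀ r ∈ Ioc 0 b, Z'' r + k / r * Z' r + Q r * Z r = 0)
    (hsuper : ∀ r ∈ Ioo 0 b, 0 < w'' r + k / r * w' r + Q r * w r) :
    StrictMonoOn (weightedWronskian k Z Z' w w') (Ioc 0 b) := by
  have hW (r) (hr : r ∈ Ioc 0 b) := hasDerivWithinAt_weightedWronskian hr.1.ne' (hZ r hr)
    (hZ' r hr) (hw r hr) (hw' r hr) (hZeq r hr)
  refine strictMonoOn_of_hasDerivWithinAt_pos (convex_Ioc 0 b)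
    (f' := fun r => r ^ k * Z r * (w'' r + k / r * w' r + Q r * w r))
    (fun r hr => (hW r hr).continuousWithinAt) (fun r hr => ?_) (fun r hr => ?_) <;>
    simp only [interior_Ioc] at hr ⊢
  · exact (hW r (Ioo_subset_Ioc_self hr)).mono Ioo_subset_Ioc_self
  · exact mul_pos (mul_pos (pow_pos hr.1 k) (hZpos r hr)) (hsuper r hr)

end WeightedWronskian

theorem pos_of_strict_supersolution {k : ℕ} {Q Z Z' Z'' w w' w'' : ℝ → ℝ} {R b : ℝ} (hbR : b ≤ R)
    (hZ : ∀ r ∈ Ioc 0 R, HasDerivWithinAt Z (Z' r) (Ioc 0 R) r)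
    (hZ' : ∀ r ∈ Ioc 0 R, HasDerivWithinAt Z' (Z'' r) (Ioc 0 R) r)
    (hZpos : ∀ r ∈ Ioc 0 R, 0 < Z r)
    (hZeq : ∀ r ∈ Ioc 0 R, Z'' r + k / r * Z' r + Q r * Z r = 0)
    (hw : ∀ r ∈ Ioc 0 b, HasDerivWithinAt w (w' r) (Ioc 0 b) r)
    (hw' : ∀ r ∈ Ioc 0 b, HasDerivWithinAt w' (w'' r) (Ioc 0 b) r)
    (hw_near : ∀ᶠ r in 𝓝[>] 0, 0 < w r)
    (hsuper : ∀ r ∈ Ioo 0 b, 0 < w r → 0 < w'' r + k / r * w' r + Q r * w r)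
    (hW : Tendsto (weightedWronskian k Z Z' w w') (𝓝[>] 0) (𝓝 0)) :
    ∀ r ∈ Ioc 0 b, 0 < w r := by
  by_contra! h
  obtain ⟨c, hc, hwc⟩ := h
  obtain ⟨r₁, hr₁, hw_r₁, hw_pos⟩ := ContinuousOn.exists_first_zero
    (fun r hr => ((hw r ⟨hr.1, hr.2.trans hc.2⟩).continuousWithinAt.mono
      (Ioc_subset_Ioc_right hc.2))) hc.1 hw_near hwc
  have hsb : Ioc 0 r₁ ⊆ Ioc 0 b := Ioc_subset_Ioc_right (hr₁.2.trans hc.2)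
  have hsR : Ioc 0 r₁ ⊆ Ioc 0 R := hsb.trans (Ioc_subset_Ioc_right hbR)
  have hmono := strictMonoOn_weightedWronskian
    (fun r hr => (hZ r (hsR hr)).mono hsR) (fun r hr => (hZ' r (hsR hr)).mono hsR)
    (fun r hr => (hw r (hsb hr)).mono hsb) (fun r hr => (hw' r (hsb hr)).mono hsb)
    (fun r hr => hZpos r (hsR (Ioo_subset_Ioc_self hr))) (fun r hr => hZeq r (hsR hr))
    (fun r hr => hsuper r ⟨hr.1, hr.2.trans_le (hr₁.2.trans hc.2)⟩ (hw_pos r hr))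
  have hW_pos : 0 < weightedWronskian k Z Z' w w' r₁ := hmono.lt_of_tendsto_nhdsGT hr₁.1 hW
  have hw'_r₁ : w' r₁ ≤ 0 :=
    ((hw r₁ (hsb (right_mem_Ioc.2 hr₁.1))).mono hsb).nonpos_of_pos_of_eq_zero
      hr₁.1 hw_r₁ hw_pos
  have hW_nonpos : weightedWronskian k Z Z' w w' r₁ ≤ 0 := by
    rw [weightedWronskian, hw_r₁, zero_mul, sub_zero]
    exact mul_nonpos_of_nonneg_of_nonpos (pow_pos hr₁.1 k).le
      (mul_nonpos_of_nonneg_of_nonpos (hZpos r₁ (hsR (right_mem_Ioc.2 hr₁.1))).le hw'_r₁)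
  exact hW_nonpos.not_gt hW_pos

namespace IsRegularSolutionWithFirstZero

variable {N : ℕ} {f f' Q Z Z' Z'' : ℝ → ℝ} {R : ℝ}

theorem nonneg {v : ℝ → ℝ} {R₀ r : ℝ} (hv : IsRegularSolutionWithFirstZero N f v R₀) (hr₀ : 0 ≤ r)
    (hr : r ≤ R₀) : 0 ≤ v r := by
  obtain ⟨-, hpos, hzero, -⟩ := hv
  rcases hr.lt_or_eq with h | rfl
  · exact (hpos r hr₀ h).le
  · exact hzero.ge

theorem exists_restrict_Ioc {v : ℝ → ℝ} {R₀ b : ℝ} (hv : IsRegularSolutionWithFirstZero N f v R₀)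
    (hb : b ≤ R₀) :
    ∃ v' v'' : ℝ → ℝ, (∀ r ∈ Ioc 0 b, HasDerivWithinAt v (v' r) (Ioc 0 b) r) ∧
      (∀ r ∈ Ioc 0 b, HasDerivWithinAt v' (v'' r) (Ioc 0 b) r) ∧
      Tendsto v (𝓝[>] 0) (𝓝 (v 0)) ∧ Tendsto v' (𝓝[>] 0) (𝓝 (v' 0)) ∧
      ∀ r ∈ Ioo 0 b, v'' r + ((N : ℝ) - 1) / r * v' r + f (v r) = 0 := by
  obtain ⟨hR₀, -, -, v', v'', hv', hv'', -, -, hveq⟩ := hv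
  have hs : Ioc 0 b ⊆ Icc 0 R₀ := Ioc_subset_Icc_self.trans (Icc_subset_Icc_right hb)
  have h0 : (0 : ℝ) ∈ Icc 0 R₀ := ⟨le_rfl, hR₀.le⟩
  exact ⟨v', v'', fun r hr => (hv' r (hs hr)).mono hs, fun r hr => (hv'' r (hs hr)).mono hs,
    (hv' 0 h0).continuousWithinAt.mono_of_mem_nhdsWithin (Icc_mem_nhdsGT hR₀),
    (hv'' 0 h0).continuousWithinAt.mono_of_mem_nhdsWithin (Icc_mem_nhdsGT hR₀),
    fun r hr => hveq r ⟨hr.1, hr.2.trans_le hb⟩⟩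

theorem lt_singularSubsolution (hN : 1 ≤ N) {v vh vh' vh'' : ℝ → ℝ} {R₀ : ℝ}
    (hv : IsRegularSolutionWithFirstZero N f v R₀)
    (hfc : StrictConvexOn ℝ (Ici 0) f) (hf' : ∀ u, 0 ≤ u → HasDerivWithinAt f (f' u) (Ici 0) u)
    (hR : 0 < R)
    (hvh' : ∀ r ∈ Ioc 0 R, HasDerivWithinAt vh (vh' r) (Ioc 0 R) r)
    (hvh'' : ∀ r ∈ Ioc 0 R, HasDerivWithinAt vh' (vh'' r) (Ioc 0 R) r)
    (hvh_inf : Tendsto vh (𝓝[>] 0) atTop) (hvhR : vh R = 0)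
    (hsub : ∀ r ∈ Ioc 0 R, 0 ≤ vh'' r + ((N : ℝ) - 1) / r * vh' r + f (vh r))
    (hZ : ∀ r ∈ Ioc 0 R, HasDerivWithinAt Z (Z' r) (Ioc 0 R) r)
    (hZ' : ∀ r ∈ Ioc 0 R, HasDerivWithinAt Z' (Z'' r) (Ioc 0 R) r)
    (hZpos : ∀ r ∈ Ioc 0 R, 0 < Z r)
    (hZeq : ∀ r ∈ Ioc 0 R, Z'' r + ((N : ℝ) - 1) / r * Z' r + Q r * Z r = 0)
    (hcomp : ∀ r ∈ Ioc 0 R, f' (vh r) ≤ Q r)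
    (hZ0 : Tendsto (fun r => r ^ (N - 1) * Z r) (𝓝[>] 0) (𝓝 0))
    (hZ'0 : Tendsto (fun r => r ^ (N - 1) * Z' r) (𝓝[>] 0) (𝓝 0))
    (hvhW : Tendsto (weightedWronskian (N - 1) Z Z' vh vh') (𝓝[>] 0) (𝓝 0)) :
    R₀ < R ∧ ∀ r ∈ Ioc 0 R₀, v r < vh r := by
  have hk : ((N - 1 : ℕ) : ℝ) = N - 1 := Nat.cast_pred hN
  set b := min R R₀
  have hsR : Ioc 0 b ⊆ Ioc 0 R := Ioc_subset_Ioc_right (min_le_left _ _)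
  obtain ⟨v', v'', hv', hv'', hv0, hv'0, hveq⟩ := hv.exists_restrict_Ioc (min_le_right R R₀)
  have hlt : ∀ r ∈ Ioc 0 b, 0 < vh r - v r := by
    refine pos_of_strict_supersolution (k := N - 1) (min_le_left _ _) hZ hZ' hZpos
      (by simpa only [hk] using hZeq)
      (fun r hr => ((hvh' r (hsR hr)).mono hsR).sub (hv' r hr))
      (fun r hr => ((hvh'' r (hsR hr)).mono hsR).sub (hv'' r hr))
      ?_ (fun r hr hw => ?_) ?_
    · simpa only [sub_eq_add_neg] using (hvh_inf.atTop_add hv0.neg).eventually_gt_atTop 0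
    · have hrR : r ∈ Ioc 0 R := hsR (Ioo_subset_Ioc_self hr)
      have hvr : 0 < v r := hv.2.1 r hr.1.le (hr.2.trans_le (min_le_right _ _))
      have hvhr : 0 ≤ vh r := by linarith
      have hconv := hfc.sub_lt_mul_sub_of_hasDerivWithinAt (mem_Ici.2 hvr.le) (mem_Ici.2 hvhr)
        (sub_pos.1 hw) (hf' (vh r) hvhr)
      have hQ := mul_le_mul_of_nonneg_right (hcomp r hrR) hw.le
      rw [hk]
      linarith [hsub r hrR, hveq r hr, mul_sub (((N : ℝ) - 1) / r) (vh' r) (v' r)]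
    · rw [weightedWronskian_sub]
      simpa using hvhW.sub (tendsto_weightedWronskian_of_tendsto hZ0 hZ'0 hv0 hv'0)
  have hR₀R : R₀ < R := by
    by_contra! h
    have := hlt R ⟨hR, le_min le_rfl h⟩
    linarith [hv.nonneg hR.le h]
  exact ⟨hR₀R, fun r hr => sub_pos.1 (hlt r ⟨hr.1, le_min (hr.2.trans hR₀R.le) hr.2⟩)⟩

theorem lt_of_initial_lt (hN : 1 ≤ N) {v₁ v₂ : ℝ → ℝ} {R₁ R₂ : ℝ}
    (hv₁ : IsRegularSolutionWithFirstZero N f v₁ R₁)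
    (hv₂ : IsRegularSolutionWithFirstZero N f v₂ R₂) (h0 : v₁ 0 < v₂ 0)
    (hfc : StrictConvexOn ℝ (Ici 0) f) (hf' : ∀ u, 0 ≤ u → HasDerivWithinAt f (f' u) (Ici 0) u)
    (hR₂R : R₂ ≤ R)
    (hZ : ∀ r ∈ Ioc 0 R, HasDerivWithinAt Z (Z' r) (Ioc 0 R) r)
    (hZ' : ∀ r ∈ Ioc 0 R, HasDerivWithinAt Z' (Z'' r) (Ioc 0 R) r)
    (hZpos : ∀ r ∈ Ioc 0 R, 0 < Z r)
    (hZeq : ∀ r ∈ Ioc 0 R, Z'' r + ((N : ℝ) - 1) / r * Z' r + Q r * Z r = 0)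
    (hcomp : ∀ r ∈ Ioc 0 R₂, f' (v₂ r) ≤ Q r)
    (hZ0 : Tendsto (fun r => r ^ (N - 1) * Z r) (𝓝[>] 0) (𝓝 0))
    (hZ'0 : Tendsto (fun r => r ^ (N - 1) * Z' r) (𝓝[>] 0) (𝓝 0)) :
    (∀ r ∈ Icc 0 R₁, v₁ r < v₂ r) ∧ R₁ < R₂ := by
  have hk : ((N - 1 : ℕ) : ℝ) = N - 1 := Nat.cast_pred hN
  set b := min R₁ R₂
  obtain ⟨v₁', v₁'', hv₁', hv₁'', hv₁0, hv₁'0, hv₁eq⟩ :=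
    hv₁.exists_restrict_Ioc (min_le_left R₁ R₂)
  obtain ⟨v₂', v₂'', hv₂', hv₂'', hv₂0, hv₂'0, hv₂eq⟩ :=
    hv₂.exists_restrict_Ioc (min_le_right R₁ R₂)
  have hlt : ∀ r ∈ Ioc 0 b, 0 < v₂ r - v₁ r := by
    refine pos_of_strict_supersolution (k := N - 1) ((min_le_right _ _).trans hR₂R) hZ hZ' hZpos
      (by simpa only [hk] using hZeq) (fun r hr => (hv₂' r hr).sub (hv₁' r hr))
      (fun r hr => (hv₂'' r hr).sub (hv₁'' r hr)) ?_ (fun r hr hw => ?_) ?_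
    · exact (hv₂0.sub hv₁0).eventually_const_lt (sub_pos.2 h0)
    · have hv₁r : 0 < v₁ r := hv₁.2.1 r hr.1.le (hr.2.trans_le (min_le_left _ _))
      have hconv := hfc.sub_lt_mul_sub_of_hasDerivWithinAt (mem_Ici.2 hv₁r.le)
        (mem_Ici.2 (by linarith)) (sub_pos.1 hw) (hf' (v₂ r) (by linarith))
      have hQ := mul_le_mul_of_nonneg_right
        (hcomp r ⟨hr.1, hr.2.le.trans (min_le_right _ _)⟩) hw.le
      rw [hk]
      linarith [hv₁eq r hr, hv₂eq r hr, mul_sub (((N : ℝ) - 1) / r) (v₂' r) (v₁' r)]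
    · rw [weightedWronskian_sub]
      simpa using (tendsto_weightedWronskian_of_tendsto hZ0 hZ'0 hv₂0 hv₂'0).sub
        (tendsto_weightedWronskian_of_tendsto hZ0 hZ'0 hv₁0 hv₁'0)
  have hR₁R₂ : R₁ < R₂ := by
    by_contra! h
    have := hlt R₂ ⟨hv₂.1, le_min h le_rfl⟩
    linarith [hv₁.nonneg hv₂.1.le h, hv₂.2.2.1]
  refine ⟨fun r hr => ?_, hR₁R₂⟩
  rcases hr.1.eq_or_lt with rfl | hr0
  · exact h0
  · exact sub_pos.1 (hlt r ⟨hr0, le_min hr.2 (hr.2.trans hR₁R₂.le)⟩)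

end IsRegularSolutionWithFirstZero

theorem comparison_with_singular_subsolution_general
    (N : ℕ) (hN : 3 ≤ N)
    -- `f ∈ C²([0,∞))` with `f > 0`, `f' > 0`, `f'' > 0`
    (f f' f'' : ℝ → ℝ)
    (hf'def : ∀ u : ℝ, 0 ≤ u → HasDerivWithinAt f (f' u) (Set.Ici 0) u)
    (hf''def : ∀ u : ℝ, 0 ≤ u → HasDerivWithinAt f' (f'' u) (Set.Ici 0) u)
    (hf''pos : ∀ u : ℝ, 0 ≤ u → 0 < f'' u)
    (R : ℝ) (hR : 0 < R)
    -- `v̂ ∈ C²((0,R])`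
    (vh vh' vh'' : ℝ → ℝ)
    (hvh' : ∀ r ∈ Set.Ioc (0:ℝ) R, HasDerivWithinAt vh (vh' r) (Set.Ioc 0 R) r)
    (hvh'' : ∀ r ∈ Set.Ioc (0:ℝ) R, HasDerivWithinAt vh' (vh'' r) (Set.Ioc 0 R) r)
    -- `v̂(r) → ∞` and `|v̂'(r)| → ∞` as `r → 0⁺`
    (hvh_inf : Filter.Tendsto vh (nhdsWithin 0 (Set.Ioi 0)) Filter.atTop)
    (hvh'_inf : Filter.Tendsto (fun r => |vh' r|) (nhdsWithin 0 (Set.Ioi 0)) Filter.atTop)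
    -- `v̂ > 0` on `(0,R)` and `v̂(R) = 0`
    (hvhR : vh R = 0)
    -- subsolution inequality on `(0,R]`
    (hsub : ∀ r ∈ Set.Ioc (0:ℝ) R, 0 ≤ vh'' r + ((N : ℝ) - 1) / r * vh' r + f (vh r))
    -- `Q ∈ C((0,R])`, `Q > 0`
    (Q : ℝ → ℝ)
    -- `Z ∈ C²((0,R])` positive solving `Z'' + ((N-1)/r) Z' + Q Z = 0`
    (Z Z' Z'' : ℝ → ℝ)
    (hZ' : ∀ r ∈ Set.Ioc (0:ℝ) R, HasDerivWithinAt Z (Z' r) (Set.Ioc 0 R) r)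
    (hZ'' : ∀ r ∈ Set.Ioc (0:ℝ) R, HasDerivWithinAt Z' (Z'' r) (Set.Ioc 0 R) r)
    (hZpos : ∀ r ∈ Set.Ioc (0:ℝ) R, 0 < Z r)
    (hZeq : ∀ r ∈ Set.Ioc (0:ℝ) R, Z'' r + ((N : ℝ) - 1) / r * Z' r + Q r * Z r = 0)
    -- `f'(v̂(r)) ≤ Q(r)` on `(0,R]`
    (hcomp : ∀ r ∈ Set.Ioc (0:ℝ) R, f' (vh r) ≤ Q r)
    -- boundary conditions at the origin
    (hlim1 : Filter.Tendsto (fun r : ℝ => r ^ (N - 1) * vh r * Z' r)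
      (nhdsWithin 0 (Set.Ioi 0)) (nhds 0))
    (hlim2 : Filter.Tendsto (fun r : ℝ => r ^ (N - 1) * vh' r * Z r)
      (nhdsWithin 0 (Set.Ioi 0)) (nhds 0)) :
    (∀ v R₀, IsRegularSolutionWithFirstZero N f v R₀ →
      R₀ < R ∧ ∀ r ∈ Set.Ioc (0:ℝ) R₀, v r < vh r) ∧
    (∀ v₁ v₂ R₁ R₂, IsRegularSolutionWithFirstZero N f v₁ R₁ →
      IsRegularSolutionWithFirstZero N f v₂ R₂ → v₁ 0 < v₂ 0 →
      (∀ r ∈ Set.Icc (0:ℝ) R₁, v₁ r < v₂ r) ∧ R₁ < R₂) := by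
  have hN1 : 1 ≤ N := by omega
  have hZ0 : Tendsto (fun r => r ^ (N - 1) * Z r) (𝓝[>] 0) (𝓝 0) :=
    tendsto_zero_of_tendsto_mul_of_tendsto_abs_atTop (hlim2.congr fun r => by ring) hvh'_inf
  have hZ'0 : Tendsto (fun r => r ^ (N - 1) * Z' r) (𝓝[>] 0) (𝓝 0) :=
    tendsto_zero_of_tendsto_mul_of_tendsto_abs_atTop (hlim1.congr fun r => by ring)
      (tendsto_abs_atTop_atTop.comp hvh_inf)
  have hvhW : Tendsto (weightedWronskian (N - 1) Z Z' vh vh') (𝓝[>] 0) (𝓝 0) := by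
    simpa using (hlim2.sub hlim1).congr fun r => by simp only [weightedWronskian]; ring
  have hf'mono : StrictMonoOn f' (Ici 0) := strictMonoOn_of_hasDerivWithinAt_pos (convex_Ici 0)
    (fun u hu => (hf''def u hu).continuousWithinAt)
    (fun u hu => (hf''def u (interior_subset hu)).mono interior_subset)
    (fun u hu => hf''pos u (interior_subset hu))
  have hfc : StrictConvexOn ℝ (Ici 0) f :=
    hf'mono.strictConvexOn_of_hasDerivWithinAt (convex_Ici 0) hf'def
  have below (v R₀) (hv : IsRegularSolutionWithFirstZero N f v R₀) :=
    hv.lt_singularSubsolution hN1 hfc hf'def hR hvh' hvh'' hvh_inf hvhR hsub hZ' hZ'' hZpos hZeq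
      hcomp hZ0 hZ'0 hvhW
  refine ⟨below, fun v₁ v₂ R₁ R₂ hv₁ hv₂ h0 => ?_⟩
  obtain ⟨hR₂R, hv₂_lt⟩ := below v₂ R₂ hv₂
  refine hv₁.lt_of_initial_lt hN1 hv₂ h0 hfc hf'def hR₂R.le hZ' hZ'' hZpos hZeq (fun r hr => ?_)
    hZ0 hZ'0
  have hv₂r : 0 ≤ v₂ r := hv₂.nonneg hr.1.le hr.2
  exact (hf'mono.monotoneOn hv₂r (hv₂r.trans (hv₂_lt r hr).le) (hv₂_lt r hr).le).trans
    (hcomp r ⟨hr.1, hr.2.trans hR₂R.le⟩)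

/-- Comparison with a singular stable subsolution: every regular solution stays
below `v̂`, its first zero is `< R`, and solutions (and hence first zeros) are
ordered according to their initial values. -/
theorem comparison_with_singular_subsolution
    (N : ℕ) (hN : 3 ≤ N)
    -- `f ∈ C²([0,∞))` with `f > 0`, `f' > 0`, `f'' > 0`
    (f f' f'' : ℝ → ℝ)
    (hf'def : ∀ u : ℝ, 0 ≤ u → HasDerivWithinAt f (f' u) (Set.Ici 0) u)
    (hf''def : ∀ u : ℝ, 0 ≤ u → HasDerivWithinAt f' (f'' u) (Set.Ici 0) u)
    (hf''cont : ContinuousOn f'' (Set.Ici 0))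
    (hfpos : ∀ u : ℝ, 0 ≤ u → 0 < f u)
    (hf'pos : ∀ u : ℝ, 0 ≤ u → 0 < f' u)
    (hf''pos : ∀ u : ℝ, 0 ≤ u → 0 < f'' u)
    (R : ℝ) (hR : 0 < R)
    -- `v̂ ∈ C²((0,R])`
    (vh vh' vh'' : ℝ → ℝ)
    (hvh' : ∀ r ∈ Set.Ioc (0:ℝ) R, HasDerivWithinAt vh (vh' r) (Set.Ioc 0 R) r)
    (hvh'' : ∀ r ∈ Set.Ioc (0:ℝ) R, HasDerivWithinAt vh' (vh'' r) (Set.Ioc 0 R) r)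
    (hvh''cont : ContinuousOn vh'' (Set.Ioc 0 R))
    -- `v̂(r) → ∞` and `|v̂'(r)| → ∞` as `r → 0⁺`
    (hvh_inf : Filter.Tendsto vh (nhdsWithin 0 (Set.Ioi 0)) Filter.atTop)
    (hvh'_inf : Filter.Tendsto (fun r => |vh' r|) (nhdsWithin 0 (Set.Ioi 0)) Filter.atTop)
    -- `v̂ > 0` on `(0,R)` and `v̂(R) = 0`
    (hvh_pos : ∀ r ∈ Set.Ioo (0:ℝ) R, 0 < vh r)
    (hvhR : vh R = 0)
    -- subsolution inequality on `(0,R]`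
    (hsub : ∀ r ∈ Set.Ioc (0:ℝ) R, 0 ≤ vh'' r + ((N : ℝ) - 1) / r * vh' r + f (vh r))
    -- `Q ∈ C((0,R])`, `Q > 0`
    (Q : ℝ → ℝ) (hQcont : ContinuousOn Q (Set.Ioc 0 R))
    (hQpos : ∀ r ∈ Set.Ioc (0:ℝ) R, 0 < Q r)
    -- `Z ∈ C²((0,R])` positive solving `Z'' + ((N-1)/r) Z' + Q Z = 0`
    (Z Z' Z'' : ℝ → ℝ)
    (hZ' : ∀ r ∈ Set.Ioc (0:ℝ) R, HasDerivWithinAt Z (Z' r) (Set.Ioc 0 R) r)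
    (hZ'' : ∀ r ∈ Set.Ioc (0:ℝ) R, HasDerivWithinAt Z' (Z'' r) (Set.Ioc 0 R) r)
    (hZ''cont : ContinuousOn Z'' (Set.Ioc 0 R))
    (hZpos : ∀ r ∈ Set.Ioc (0:ℝ) R, 0 < Z r)
    (hZeq : ∀ r ∈ Set.Ioc (0:ℝ) R, Z'' r + ((N : ℝ) - 1) / r * Z' r + Q r * Z r = 0)
    -- `f'(v̂(r)) ≤ Q(r)` on `(0,R]`
    (hcomp : ∀ r ∈ Set.Ioc (0:ℝ) R, f' (vh r) ≤ Q r)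
    -- boundary conditions at the origin
    (hlim1 : Filter.Tendsto (fun r : ℝ => r ^ (N - 1) * vh r * Z' r)
      (nhdsWithin 0 (Set.Ioi 0)) (nhds 0))
    (hlim2 : Filter.Tendsto (fun r : ℝ => r ^ (N - 1) * vh' r * Z r)
      (nhdsWithin 0 (Set.Ioi 0)) (nhds 0)) :
    (∀ v R₀, IsRegularSolutionWithFirstZero N f v R₀ →
      R₀ < R ∧ ∀ r ∈ Set.Ioc (0:ℝ) R₀, v r < vh r) ∧
    (∀ v₁ v₂ R₁ R₂, IsRegularSolutionWithFirstZero N f v₁ R₁ →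
      IsRegularSolutionWithFirstZero N f v₂ R₂ → v₁ 0 < v₂ 0 →
      (∀ r ∈ Set.Icc (0:ℝ) R₁, v₁ r < v₂ r) ∧ R₁ < R₂) :=
  comparison_with_singular_subsolution_general N hN f f' f'' hf'def hf''def hf''pos R hR vh vh' vh''
    hvh' hvh'' hvh_inf hvh'_inf hvhR hsub Q Z Z' Z'' hZ' hZ'' hZpos hZeq hcomp hlim1 hlim2
end

section
/- Let N ≥ 6 be an integer and q < N/2 a real number. Let f ∈ C²([0,∞)) satisfy f > 0, f' > 0, f'' > 0 and F(0) < ∞. Assume there exist M ≥ 0 and real numbers q₀, q₁ with 1/2 < q₀ < 1 < q₁ < (N+2)/4 such that q₀ ≤ f'(u)·F(u) ≤ q₁ for all u ≥ M. Let R > 0 and let v be a smooth positive function on (0,R) with v(R) = 0 such that F(v(r)) = (r²/(2N−4q))·(1 + θ(r)) for 0 < r < R, where θ ∈ C¹((0,R)), θ(r) → 0 and r·θ'(r) → 0 as r → 0⁺. If moreover v'' + ((N−1)/r)·v' + f(v) ≥ 0 on (0,R] and f'(v(r)) ≤ (N−2)²/(4r²) for 0 < r ≤ R, then for any two regular solutions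 (v₁, R₁) and (v₂, R₂) with first zero of v'' + ((N−1)/r)·v' + f(v) = 0 with v₁(0) < v₂(0), one has R₁ < R₂; that is, the first zero is strictly increasing in the initial value. -/
/-!
The comparisons all go through the Hardy operator `L z = z'' + (N-1)/r z' + (N-2)²/(4r²) z`.
If `w` is a subsolution and `0 < u ≤ w` a solution of `u'' + (N-1)/r u' + f(u) = 0` with
`f'(w) ≤ (N-2)²/(4r²)`, convexity of `f` gives `L (w - u) ≥ 0`. For `z` with `L z ≥ 0` the flux
`W = r (r^((N-2)/2) z)'` satisfies `W' = r^(N/2) L z ≥ 0`; if `W → 0` at the origin, then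
`W ≥ 0`, so `r^((N-2)/2) z` is nondecreasing and `z` cannot reach zero after being positive.

For the singular subsolution `v`, the bound `f' F ≤ q₁` gives `(f F)' ≤ q₁ - 1`, hence
`F(u)^(q₁-1) u = O(1)`; as `F(v(r)) ≍ r²` this yields `v(r) = O(r^(-2(q₁-1)))` and
`r v'(r) = O(v(r))`, and `q₁ < (N+2)/4` makes the flux of `v` vanish at `0`. So every regular
solution stays below `v` and vanishes before `R`. The larger of two regular solutions thereby
inherits the stability of `v`, and comparing the two shows that the smaller one vanishes first.
-/

/-- `F(u) = ∫_u^∞ ds / f(s)`. -/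
noncomputable def Fint (f : ℝ → ℝ) (u : ℝ) : ℝ := ∫ s in Set.Ioi u, (f s)⁻¹

open Set MeasureTheory Filter Topology

section Fint

variable {f : ℝ → ℝ}

theorem Fint_eq_intervalIntegral_add (hInt : IntegrableOn (fun s => (f s)⁻¹) (Ioi 0))
    {x y : ℝ} (hx : 0 ≤ x) (hxy : x ≤ y) :
    Fint f x = (∫ s in x..y, (f s)⁻¹) + Fint f y := by
  have hIx : IntegrableOn (fun s => (f s)⁻¹) (Ioi x) := hInt.mono_set (Ioi_subset_Ioi hx)
  rw [Fint, Fint, intervalIntegral.integral_of_le hxy, ← Ioc_union_Ioi_eq_Ioi hxy,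
    setIntegral_union (Ioc_disjoint_Ioi le_rfl) measurableSet_Ioi
      (hIx.mono_set Ioc_subset_Ioi_self) (hIx.mono_set (Ioi_subset_Ioi hxy))]

theorem Fint_pos (hInt : IntegrableOn (fun s => (f s)⁻¹) (Ioi 0))
    (hpos : ∀ u, 0 < u → 0 < f u) {u : ℝ} (hu : 0 ≤ u) : 0 < Fint f u := by
  have hpos' : ∀ s ∈ Ioi u, 0 < (f s)⁻¹ := fun s hs => inv_pos.mpr (hpos s (hu.trans_lt hs))
  rw [Fint, setIntegral_pos_iff_support_of_nonneg_ae
    ((ae_restrict_iff' measurableSet_Ioi).2 (ae_of_all _ fun s hs => (hpos' s hs).le))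
    (hInt.mono_set (Ioi_subset_Ioi hu)),
    inter_eq_right.2 fun s hs => Function.mem_support.2 (hpos' s hs).ne']
  simp

theorem Fint_antitoneOn (hInt : IntegrableOn (fun s => (f s)⁻¹) (Ioi 0))
    (hpos : ∀ u, 0 < u → 0 < f u) : AntitoneOn (Fint f) (Ioi 0) := by
  intro x hx y _ hxy
  rw [Fint_eq_intervalIntegral_add hInt (le_of_lt hx) hxy, le_add_iff_nonneg_left]
  exact intervalIntegral.integral_nonneg hxy fun t ht =>
    (inv_pos.mpr (hpos t (lt_of_lt_of_le hx ht.1))).le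

theorem hasDerivAt_Fint (hInt : IntegrableOn (fun s => (f s)⁻¹) (Ioi 0))
    (hcont : ContinuousOn f (Ioi 0)) (hpos : ∀ u, 0 < u → 0 < f u) {u : ℝ} (hu : 0 < u) :
    HasDerivAt (Fint f) (-(f u)⁻¹) u := by
  have hinv : ContinuousOn (fun s => (f s)⁻¹) (Ioi 0) :=
    hcont.inv₀ fun s hs => (hpos s hs).ne'
  have hI : IntervalIntegrable (fun s => (f s)⁻¹) volume u (u + 1) := by
    rw [intervalIntegrable_iff_integrableOn_Ioc_of_le (by linarith)]
    exact hInt.mono_set fun t ht => hu.trans ht.1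
  refine ((intervalIntegral.integral_hasDerivAt_left hI
    (hinv.stronglyMeasurableAtFilter isOpen_Ioi u hu)
    (hinv.continuousAt (Ioi_mem_nhds hu))).add_const (Fint f (u + 1))).congr_of_eventuallyEq ?_
  filter_upwards [Ioo_mem_nhds hu (lt_add_one u)] with x hx
  exact Fint_eq_intervalIntegral_add hInt hx.1.le hx.2.le

end Fint

theorem antitoneOn_Ici_of_hasDerivAt {g g' : ℝ → ℝ} {M : ℝ}
    (hg : ∀ x ∈ Ici M, HasDerivAt g (g' x) x) (hg' : ∀ x ∈ Ioi M, g' x ≤ 0) :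
    AntitoneOn g (Ici M) :=
  antitoneOn_of_hasDerivWithinAt_nonpos (convex_Ici M)
    (fun x hx => (hg x hx).continuousAt.continuousWithinAt)
    (by rw [interior_Ici]; exact fun x hx => (hg x (mem_Ici.2 (le_of_lt hx))).hasDerivWithinAt)
    (by simpa only [interior_Ici] using hg')

section Growth

variable {f f' : ℝ → ℝ} {M p : ℝ}

theorem mul_Fint_le (hInt : IntegrableOn (fun s => (f s)⁻¹) (Ioi 0))
    (hf : ∀ u, 0 < u → HasDerivAt f (f' u) u) (hpos : ∀ u, 0 < u → 0 < f u) (hM : 0 < M)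
    (hbound : ∀ u, M ≤ u → f' u * Fint f u ≤ 1 + p) {u : ℝ} (hu : M ≤ u) :
    f u * Fint f u ≤ f M * Fint f M + p * (u - M) := by
  have hcont : ContinuousOn f (Ioi 0) := fun x hx => (hf x hx).continuousAt.continuousWithinAt
  have hanti : AntitoneOn (fun u => f u * Fint f u - p * u) (Ici M) := by
    refine antitoneOn_Ici_of_hasDerivAt (g' := fun x => f' x * Fint f x - 1 - p)
      (fun x hx => ?_) fun x hx => by linarith [hbound x (le_of_lt hx)]
    have hx0 : 0 < x := hM.trans_le hx
    refine (((hf x hx0).mul (hasDerivAt_Fint hInt hcont hpos hx0)).sub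
      ((hasDerivAt_id x).const_mul p)).congr_deriv ?_
    field_simp [(hpos x hx0).ne']
    ring
  have := hanti (mem_Ici.2 le_rfl) (mem_Ici.2 hu) hu
  dsimp only at this
  linarith

theorem Fint_rpow_mul_le (hInt : IntegrableOn (fun s => (f s)⁻¹) (Ioi 0))
    (hf : ∀ u, 0 < u → HasDerivAt f (f' u) u) (hpos : ∀ u, 0 < u → 0 < f u) (hM : 0 < M)
    (hp : 0 ≤ p) (hbound : ∀ u, M ≤ u → f' u * Fint f u ≤ 1 + p) {u : ℝ} (hu : M ≤ u) :
    Fint f u ^ p * (f M * Fint f M + p * (u - M)) ≤ Fint f M ^ p * (f M * Fint f M) := by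
  have hcont : ContinuousOn f (Ioi 0) := fun x hx => (hf x hx).continuousAt.continuousWithinAt
  set a := f M * Fint f M
  have hanti : AntitoneOn (fun u => Fint f u ^ p * (a + p * (u - M))) (Ici M) := by
    refine antitoneOn_Ici_of_hasDerivAt
      (g' := fun x => p * Fint f x ^ (p - 1) * (Fint f x - (a + p * (x - M)) / f x))
      (fun x hx => ?_) fun x hx => ?_
    · have hx0 : 0 < x := hM.trans_le hx
      have hF := Fint_pos hInt hpos hx0.le
      refine (((hasDerivAt_Fint hInt hcont hpos hx0).rpow_const (Or.inl hF.ne')).mul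
        ((((hasDerivAt_id x).sub_const M).const_mul p).const_add a)).congr_deriv ?_
      rw [Real.rpow_sub_one hF.ne', id]
      field_simp [(hpos x hx0).ne']
      ring
    · have hx0 : 0 < x := hM.trans hx
      have hF := Fint_pos hInt hpos hx0.le
      have hle : Fint f x ≤ (a + p * (x - M)) / f x := by
        rw [le_div_iff₀ (hpos x hx0)]
        linarith [mul_Fint_le hInt hf hpos hM hbound (le_of_lt hx)]
      exact mul_nonpos_of_nonneg_of_nonpos (by positivity) (by linarith)
  have := hanti (mem_Ici.2 le_rfl) (mem_Ici.2 hu) hu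
  simpa using this

end Growth

theorem tendsto_rpow_nhdsGT_zero {p : ℝ} (hp : 0 < p) :
    Tendsto (fun r : ℝ => r ^ p) (𝓝[>] 0) (𝓝 0) := by
  simpa [Real.zero_rpow hp.ne'] using
    (Real.continuousAt_rpow_const 0 p (Or.inr hp.le)).tendsto.mono_left nhdsWithin_le_nhds

theorem tendsto_rpow_mul_of_rpow_mul_le {g : ℝ → ℝ} {m p C : ℝ} (hpm : p < m)
    (hg : ∀ᶠ r in 𝓝[>] 0, 0 ≤ g r) (hC : ∀ᶠ r in 𝓝[>] 0, r ^ p * g r ≤ C) :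
    Tendsto (fun r => r ^ m * g r) (𝓝[>] 0) (𝓝 0) := by
  refine squeeze_zero' ?_ ?_
    (by simpa using (tendsto_rpow_nhdsGT_zero (sub_pos.2 hpm)).const_mul C)
  · filter_upwards [hg, self_mem_nhdsWithin] with r hgr hr using
      mul_nonneg (Real.rpow_nonneg (le_of_lt hr) _) hgr
  · filter_upwards [hC, self_mem_nhdsWithin] with r hCr hr
    rw [show r ^ m = r ^ (m - p) * r ^ p by rw [← Real.rpow_add hr]; ring_nf, mul_assoc,
      mul_comm C]
    exact mul_le_mul_of_nonneg_left hCr (Real.rpow_nonneg (le_of_lt hr) _)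

theorem sub_le_deriv_mul_sub {f f' : ℝ → ℝ} (hf : ∀ u, 0 < u → HasDerivAt f (f' u) u)
    (hf' : MonotoneOn f' (Ioi 0)) {a b : ℝ} (ha : 0 < a) (hab : a ≤ b) :
    f b - f a ≤ f' b * (b - a) := by
  rcases hab.eq_or_lt with rfl | hlt
  · simp
  obtain ⟨c, hc, hslope⟩ := exists_hasDerivAt_eq_slope f f' hlt
    (fun x hx => (hf x (ha.trans_le hx.1)).continuousAt.continuousWithinAt)
    (fun x hx => hf x (ha.trans hx.1))
  rw [eq_div_iff (sub_ne_zero.2 hlt.ne')] at hslope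
  rw [← hslope]
  exact mul_le_mul_of_nonneg_right (hf' (ha.trans hc.1) (ha.trans hlt) hc.2.le)
    (sub_nonneg.2 hab)

/-- `r · (r ^ ((n - 2) / 2) · z)'`: its derivative is `r ^ (n / 2)` times the Hardy operator
`z'' + (n - 1) / r · z' + (n - 2)² / (4 r²) · z` applied to `z`. -/
noncomputable def radialFlux (n : ℝ) (z z' : ℝ → ℝ) (r : ℝ) : ℝ :=
  r ^ (n / 2) * z' r + (n - 2) / 2 * r ^ ((n - 2) / 2) * z r

section RadialFlux

variable {n r : ℝ} {z z' z'' : ℝ → ℝ}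

theorem radialFlux_sub (z₁ z₁' z₂ z₂' : ℝ → ℝ) (r : ℝ) :
    radialFlux n (z₁ - z₂) (z₁' - z₂') r = radialFlux n z₁ z₁' r - radialFlux n z₂ z₂' r := by
  simp only [radialFlux, Pi.sub_apply]
  ring

theorem hasDerivAt_rpow_mul (hr : 0 < r) (hz : HasDerivAt z (z' r) r) :
    HasDerivAt (fun s => s ^ ((n - 2) / 2) * z s) (radialFlux n z z' r / r) r := by
  refine ((Real.hasDerivAt_rpow_const (Or.inl hr.ne')).mul hz).congr_deriv ?_
  rw [radialFlux, show n / 2 = (n - 2) / 2 + 1 by ring, Real.rpow_add_one hr.ne',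
    Real.rpow_sub_one hr.ne']
  field_simp
  ring

theorem hasDerivAt_radialFlux (hr : 0 < r) (hz : HasDerivAt z (z' r) r)
    (hz' : HasDerivAt z' (z'' r) r) :
    HasDerivAt (radialFlux n z z')
      (r ^ (n / 2) * (z'' r + (n - 1) / r * z' r + (n - 2) ^ 2 / (4 * r ^ 2) * z r)) r := by
  refine (((Real.hasDerivAt_rpow_const (Or.inl hr.ne')).mul hz').add
    (((Real.hasDerivAt_rpow_const (Or.inl hr.ne')).const_mul ((n - 2) / 2)).mul hz)).congr_deriv
    ?_
  have h1 : r ^ (n / 2 - 1) = r ^ (n / 2) / r := Real.rpow_sub_one hr.ne' _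
  have h2 : r ^ ((n - 2) / 2 - 1) = r ^ (n / 2) / r ^ 2 := by
    rw [show (n - 2) / 2 - 1 = n / 2 - 2 by ring, Real.rpow_sub hr, Real.rpow_two]
  have h3 : r ^ ((n - 2) / 2) = r ^ (n / 2) / r := by
    rw [show (n - 2) / 2 = n / 2 - 1 by ring, h1]
  rw [h1, h2, h3]
  generalize r ^ (n / 2) = P
  field_simp
  ring

theorem tendsto_radialFlux_of_tendsto (hn : 2 < n) {a b : ℝ}
    (hz : Tendsto z (𝓝[>] 0) (𝓝 a)) (hz' : Tendsto z' (𝓝[>] 0) (𝓝 b)) :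
    Tendsto (radialFlux n z z') (𝓝[>] 0) (𝓝 0) := by
  show Tendsto (fun r => r ^ (n / 2) * z' r + (n - 2) / 2 * r ^ ((n - 2) / 2) * z r) _ _
  simpa using ((tendsto_rpow_nhdsGT_zero (by linarith)).mul hz').add
    (((tendsto_rpow_nhdsGT_zero (by linarith)).const_mul ((n - 2) / 2)).mul hz)

end RadialFlux

section Hardy

variable {n : ℝ} {z z' z'' : ℝ → ℝ}

theorem pos_of_hardy_subsolution {r₀ : ℝ} (hr₀ : 0 < r₀) (hzc : ContinuousOn z (Ioc 0 r₀))
    (hz : ∀ r ∈ Ioo 0 r₀, HasDerivAt z (z' r) r) (hz' : ∀ r ∈ Ioo 0 r₀, HasDerivAt z' (z'' r) r)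
    (hsub : ∀ r ∈ Ioo 0 r₀,
      0 ≤ z'' r + (n - 1) / r * z' r + (n - 2) ^ 2 / (4 * r ^ 2) * z r)
    (hpos : ∀ r ∈ Ioo 0 r₀, 0 < z r) (hflux : Tendsto (radialFlux n z z') (𝓝[>] 0) (𝓝 0)) :
    0 < z r₀ := by
  have hW := fun r (hr : r ∈ Ioo 0 r₀) =>
    hasDerivAt_radialFlux (n := n) hr.1 (hz r hr) (hz' r hr)
  have hWmono : MonotoneOn (radialFlux n z z') (Ioo 0 r₀) :=
    monotoneOn_of_hasDerivWithinAt_nonneg (convex_Ioo 0 r₀)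
      (fun r hr => (hW r hr).continuousAt.continuousWithinAt)
      (by rw [interior_Ioo]; exact fun r hr => (hW r hr).hasDerivWithinAt)
      (by
        rw [interior_Ioo]
        exact fun r hr => mul_nonneg (Real.rpow_nonneg hr.1.le _) (hsub r hr))
  have hWnonneg : ∀ r ∈ Ioo 0 r₀, 0 ≤ radialFlux n z z' r := fun r hr =>
    le_of_tendsto hflux <| by
      filter_upwards [Ioo_mem_nhdsGT hr.1] with s hs using
        hWmono ⟨hs.1, hs.2.trans hr.2⟩ hr hs.2.le
  have hgmono : MonotoneOn (fun r => r ^ ((n - 2) / 2) * z r) (Ioc 0 r₀) :=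
    monotoneOn_of_hasDerivWithinAt_nonneg (convex_Ioc 0 r₀)
      ((continuousOn_id.rpow_const fun r hr => Or.inl hr.1.ne').mul hzc)
      (by
        rw [interior_Ioc]
        exact fun r hr => (hasDerivAt_rpow_mul hr.1 (hz r hr)).hasDerivWithinAt)
      (by rw [interior_Ioc]; exact fun r hr => div_nonneg (hWnonneg r hr) hr.1.le)
  have hhalf : r₀ / 2 ∈ Ioo 0 r₀ := ⟨by linarith, by linarith⟩
  have hle := hgmono ⟨hhalf.1, hhalf.2.le⟩ ⟨hr₀, le_rfl⟩ hhalf.2.le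
  exact pos_of_mul_pos_right
    ((mul_pos (Real.rpow_pos_of_pos hhalf.1 _) (hpos _ hhalf)).trans_le hle)
    (Real.rpow_nonneg hr₀.le _)

theorem pos_on_Ioc_of_hardy_subsolution {b : ℝ} (hzc : ContinuousOn z (Ioc 0 b))
    (hz : ∀ r ∈ Ioo 0 b, HasDerivAt z (z' r) r) (hz' : ∀ r ∈ Ioo 0 b, HasDerivAt z' (z'' r) r)
    (hsub : ∀ r ∈ Ioo 0 b, 0 < z r →
      0 ≤ z'' r + (n - 1) / r * z' r + (n - 2) ^ 2 / (4 * r ^ 2) * z r)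
    (hnear : ∀ᶠ r in 𝓝[>] 0, 0 < z r) (hflux : Tendsto (radialFlux n z z') (𝓝[>] 0) (𝓝 0)) :
    ∀ r ∈ Ioc 0 b, 0 < z r := by
  by_contra! hneg
  obtain ⟨r₁, hr₁, hzr₁⟩ := hneg
  obtain ⟨δ, hδ, hδpos⟩ := mem_nhdsGT_iff_exists_Ioo_subset.1 hnear
  have hδr₁ : δ ≤ r₁ := not_lt.1 fun h => hzr₁.not_gt (hδpos ⟨hr₁.1, h⟩)
  have hzc' : ContinuousOn z (Icc δ r₁) :=
    hzc.mono fun r hr => ⟨lt_of_lt_of_le hδ hr.1, hr.2.trans hr₁.2⟩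
  have hT : IsCompact (Icc δ r₁ ∩ z ⁻¹' Iic 0) := isCompact_Icc.of_isClosed_subset
    (hzc'.preimage_isClosed_of_isClosed isClosed_Icc isClosed_Iic) inter_subset_left
  obtain ⟨r₀, ⟨hr₀, hzr₀⟩, hleast⟩ := hT.exists_isLeast ⟨r₁, ⟨hδr₁, le_rfl⟩, hzr₁⟩
  have hsub₀ : Ioo 0 r₀ ⊆ Ioo 0 b := Ioo_subset_Ioo_right (hr₀.2.trans hr₁.2)
  have hpos₀ : ∀ r ∈ Ioo 0 r₀, 0 < z r := fun r hr => by
    by_contra! hzr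
    rcases lt_or_ge r δ with h | h
    · exact hzr.not_gt (hδpos ⟨hr.1, h⟩)
    · exact hr.2.not_ge (hleast ⟨⟨h, hr.2.le.trans hr₀.2⟩, hzr⟩)
  exact hzr₀.not_gt <| pos_of_hardy_subsolution (lt_of_lt_of_le hδ hr₀.1)
    (hzc.mono (Ioc_subset_Ioc_right (hr₀.2.trans hr₁.2))) (fun r hr => hz r (hsub₀ hr))
    (fun r hr => hz' r (hsub₀ hr)) (fun r hr => hsub r (hsub₀ hr) (hpos₀ r hr)) hpos₀ hflux

end Hardy

theorem lt_on_Ioc_of_subsolution_of_solution {n b : ℝ} {f f' w w' w'' u u' u'' : ℝ → ℝ}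
    (hf : ∀ x, 0 < x → HasDerivAt f (f' x) x) (hf' : MonotoneOn f' (Ioi 0))
    (hwc : ContinuousOn w (Ioc 0 b)) (huc : ContinuousOn u (Ioc 0 b))
    (hw : ∀ r ∈ Ioo 0 b, HasDerivAt w (w' r) r) (hw' : ∀ r ∈ Ioo 0 b, HasDerivAt w' (w'' r) r)
    (hu : ∀ r ∈ Ioo 0 b, HasDerivAt u (u' r) r) (hu' : ∀ r ∈ Ioo 0 b, HasDerivAt u' (u'' r) r)
    (hwsub : ∀ r ∈ Ioo 0 b, 0 ≤ w'' r + (n - 1) / r * w' r + f (w r))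
    (husol : ∀ r ∈ Ioo 0 b, u'' r + (n - 1) / r * u' r + f (u r) = 0)
    (hupos : ∀ r ∈ Ioo 0 b, 0 < u r)
    (hstab : ∀ r ∈ Ioo 0 b, f' (w r) ≤ (n - 2) ^ 2 / (4 * r ^ 2))
    (hnear : ∀ᶠ r in 𝓝[>] 0, u r < w r)
    (hflux : Tendsto (radialFlux n (w - u) (w' - u')) (𝓝[>] 0) (𝓝 0)) :
    ∀ r ∈ Ioc 0 b, u r < w r := by
  refine fun r hr => sub_pos.1 (pos_on_Ioc_of_hardy_subsolution (z'' := w'' - u'')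
    (hwc.sub huc) (fun r hr => (hw r hr).sub (hu r hr)) (fun r hr => (hw' r hr).sub (hu' r hr))
    (fun r hr hzr => ?_) (hnear.mono fun r => sub_pos.2) hflux r hr)
  have hconv := sub_le_deriv_mul_sub hf hf' (hupos r hr) (sub_pos.1 hzr).le
  have hlin := mul_le_mul_of_nonneg_right (hstab r hr) hzr.le
  simp only [Pi.sub_apply] at hzr hlin ⊢
  linarith [hwsub r hr, husol r hr]

section SingularSubsolution

variable {f f' v v' θ θ' : ℝ → ℝ} {A R : ℝ}

theorem tendsto_atTop_of_Fint_comp_eq (hInt : IntegrableOn (fun s => (f s)⁻¹) (Ioi 0))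
    (hpos : ∀ u, 0 < u → 0 < f u) (hR : 0 < R) (hvpos : ∀ r ∈ Ioo 0 R, 0 < v r)
    (hform : ∀ r ∈ Ioo 0 R, Fint f (v r) = r ^ 2 / A * (1 + θ r))
    (hθ0 : Tendsto θ (𝓝[>] 0) (𝓝 0)) : Tendsto v (𝓝[>] 0) atTop := by
  have hF : Tendsto (fun r => Fint f (v r)) (𝓝[>] 0) (𝓝 0) := by
    have h : Tendsto (fun r : ℝ => r ^ 2 / A * (1 + θ r)) (𝓝[>] 0) (𝓝 0) := by
      simpa using ((((continuous_pow 2).tendsto (0 : ℝ)).mono_left nhdsWithin_le_nhds).div_const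
        A).mul ((tendsto_const_nhds (x := (1 : ℝ))).add hθ0)
    refine h.congr' ?_
    filter_upwards [Ioo_mem_nhdsGT hR] with r hr using (hform r hr).symm
  refine tendsto_atTop.2 fun b => ?_
  have hb : 0 < max b 1 := lt_max_of_lt_right one_pos
  filter_upwards [Ioo_mem_nhdsGT hR, hF.eventually_lt_const (Fint_pos hInt hpos hb.le)]
    with r hr hlt
  by_contra! hvb
  exact hlt.not_ge
    (Fint_antitoneOn hInt hpos (hvpos r hr) hb (hvb.le.trans (le_max_left _ _)))

theorem eventually_div_le_Fint_comp (hA : 0 < A) (hR : 0 < R)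
    (hform : ∀ r ∈ Ioo 0 R, Fint f (v r) = r ^ 2 / A * (1 + θ r))
    (hθ0 : Tendsto θ (𝓝[>] 0) (𝓝 0)) : ∀ᶠ r in 𝓝[>] 0, r ^ 2 / (2 * A) ≤ Fint f (v r) := by
  filter_upwards [Ioo_mem_nhdsGT hR,
    hθ0.eventually (Ioi_mem_nhds (by norm_num : (-1 / 2 : ℝ) < 0))] with r hr hθr
  rw [hform r hr, show r ^ 2 / (2 * A) = r ^ 2 / A * (1 / 2) by field_simp]
  exact mul_le_mul_of_nonneg_left (by linarith) (by positivity)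

theorem deriv_eq_of_Fint_comp_eq (hInt : IntegrableOn (fun s => (f s)⁻¹) (Ioi 0))
    (hcont : ContinuousOn f (Ioi 0)) (hpos : ∀ u, 0 < u → 0 < f u)
    (hv : ∀ r ∈ Ioo 0 R, HasDerivAt v (v' r) r) (hvpos : ∀ r ∈ Ioo 0 R, 0 < v r)
    (hθ' : ∀ r ∈ Ioo 0 R, HasDerivAt θ (θ' r) r)
    (hform : ∀ r ∈ Ioo 0 R, Fint f (v r) = r ^ 2 / A * (1 + θ r)) {r : ℝ}
    (hr : r ∈ Ioo 0 R) :
    v' r = -f (v r) * (2 * r / A * (1 + θ r) + r ^ 2 / A * θ' r) := by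
  have hrhs : HasDerivAt (fun s => s ^ 2 / A * (1 + θ s)) _ r :=
    ((hasDerivAt_pow 2 r).div_const A).mul ((hθ' r hr).const_add 1)
  have hlhs := ((hasDerivAt_Fint hInt hcont hpos (hvpos r hr)).comp r
    (hv r hr)).congr_of_eventuallyEq (f₁ := fun s => s ^ 2 / A * (1 + θ s))
    (by filter_upwards [Ioo_mem_nhds hr.1 hr.2] with s hs using (hform s hs).symm)
  have h : -(f (v r))⁻¹ * v' r = 2 * r / A * (1 + θ r) + r ^ 2 / A * θ' r := by
    rw [hlhs.unique hrhs]
    norm_num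
  rw [← h]
  field_simp [(hpos _ (hvpos r hr)).ne']

theorem eventually_abs_deriv_mul_le (hInt : IntegrableOn (fun s => (f s)⁻¹) (Ioi 0))
    (hcont : ContinuousOn f (Ioi 0)) (hpos : ∀ u, 0 < u → 0 < f u) (hA : 0 < A) (hR : 0 < R)
    (hv : ∀ r ∈ Ioo 0 R, HasDerivAt v (v' r) r) (hvpos : ∀ r ∈ Ioo 0 R, 0 < v r)
    (hθ' : ∀ r ∈ Ioo 0 R, HasDerivAt θ (θ' r) r)
    (hform : ∀ r ∈ Ioo 0 R, Fint f (v r) = r ^ 2 / A * (1 + θ r))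
    (hθ0 : Tendsto θ (𝓝[>] 0) (𝓝 0)) (hθ'0 : Tendsto (fun r => r * θ' r) (𝓝[>] 0) (𝓝 0)) :
    ∀ᶠ r in 𝓝[>] 0, |v' r| * r ≤ 8 * (f (v r) * Fint f (v r)) := by
  filter_upwards [Ioo_mem_nhdsGT hR, eventually_div_le_Fint_comp hA hR hform hθ0,
    hθ0.eventually (Ioo_mem_nhds (by norm_num : (-1 / 2 : ℝ) < 0) (by norm_num : (0 : ℝ) < 1 / 2)),
    hθ'0.eventually (Ioo_mem_nhds (by norm_num : (-1 : ℝ) < 0) one_pos)]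
    with r hr hF hθr hθ'r
  set t := 2 * (1 + θ r) + r * θ' r
  have ht : 0 ≤ t ∧ t ≤ 4 := by constructor <;> linarith [hθr.1, hθr.2, hθ'r.1, hθ'r.2]
  have hfv := hpos _ (hvpos r hr)
  have heq : v' r * r = -(f (v r) * (r ^ 2 / A) * t) := by
    rw [deriv_eq_of_Fint_comp_eq hInt hcont hpos hv hvpos hθ' hform hr]
    ring
  have hr2 : r ^ 2 / A ≤ 2 * Fint f (v r) := by
    rw [show r ^ 2 / A = 2 * (r ^ 2 / (2 * A)) by field_simp]
    linarith
  calc |v' r| * r = f (v r) * (r ^ 2 / A) * t := by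
        rw [← abs_of_pos hr.1, ← abs_mul, abs_of_pos hr.1, heq, abs_neg,
          abs_of_nonneg (mul_nonneg (by positivity) ht.1)]
    _ ≤ f (v r) * (r ^ 2 / A) * 4 := mul_le_mul_of_nonneg_left ht.2 (by positivity)
    _ ≤ 8 * (f (v r) * Fint f (v r)) := by nlinarith

variable {M p : ℝ}

theorem tendsto_rpow_mul_of_Fint_comp_eq {m : ℝ} (hpm : 2 * p < m) (hp : 0 ≤ p)
    (hInt : IntegrableOn (fun s => (f s)⁻¹) (Ioi 0)) (hf : ∀ u, 0 < u → HasDerivAt f (f' u) u)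
    (hpos : ∀ u, 0 < u → 0 < f u) (hM : 0 < M)
    (hbound : ∀ u, M ≤ u → f' u * Fint f u ≤ 1 + p) (hA : 0 < A) (hR : 0 < R)
    (hvpos : ∀ r ∈ Ioo 0 R, 0 < v r)
    (hform : ∀ r ∈ Ioo 0 R, Fint f (v r) = r ^ 2 / A * (1 + θ r))
    (hθ0 : Tendsto θ (𝓝[>] 0) (𝓝 0)) :
    Tendsto (fun r => r ^ m * (f M * Fint f M + p * (v r - M))) (𝓝[>] 0) (𝓝 0) := by
  set a := f M * Fint f M
  have ha : 0 < a := mul_pos (hpos M hM) (Fint_pos hInt hpos hM.le)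
  have hvM : ∀ᶠ r in 𝓝[>] 0, M ≤ v r :=
    (tendsto_atTop_of_Fint_comp_eq hInt hpos hR hvpos hform hθ0).eventually_ge_atTop M
  have hc : ∀ᶠ r in 𝓝[>] 0, 0 ≤ a + p * (v r - M) := by
    filter_upwards [hvM] with r hr using add_nonneg ha.le (mul_nonneg hp (sub_nonneg.2 hr))
  refine tendsto_rpow_mul_of_rpow_mul_le (C := (2 * A) ^ p * (Fint f M ^ p * a)) hpm hc ?_
  filter_upwards [hvM, hc, eventually_div_le_Fint_comp hA hR hform hθ0, self_mem_nhdsWithin]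
    with r hvr hcr hFr hr
  have hpow : r ^ (2 * p) = (2 * A) ^ p * (r ^ 2 / (2 * A)) ^ p := by
    rw [Real.div_rpow (by positivity) (by positivity), Real.rpow_mul (le_of_lt hr),
      Real.rpow_two]
    field_simp [(Real.rpow_pos_of_pos (by positivity : 0 < 2 * A) p).ne']
  rw [hpow, mul_assoc]
  refine mul_le_mul_of_nonneg_left ?_ (by positivity)
  calc (r ^ 2 / (2 * A)) ^ p * (a + p * (v r - M))
      ≤ Fint f (v r) ^ p * (a + p * (v r - M)) :=
        mul_le_mul_of_nonneg_right (Real.rpow_le_rpow (by positivity) hFr hp) hcr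
    _ ≤ Fint f M ^ p * a := Fint_rpow_mul_le hInt hf hpos hM hp hbound hvr

theorem tendsto_radialFlux_of_Fint_comp_eq {n : ℝ} (hnp : 4 * p < n - 2) (hp : 0 < p)
    (hInt : IntegrableOn (fun s => (f s)⁻¹) (Ioi 0)) (hf : ∀ u, 0 < u → HasDerivAt f (f' u) u)
    (hpos : ∀ u, 0 < u → 0 < f u) (hM : 0 < M)
    (hbound : ∀ u, M ≤ u → f' u * Fint f u ≤ 1 + p) (hA : 0 < A) (hR : 0 < R)
    (hv : ∀ r ∈ Ioo 0 R, HasDerivAt v (v' r) r) (hvpos : ∀ r ∈ Ioo 0 R, 0 < v r)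
    (hθ' : ∀ r ∈ Ioo 0 R, HasDerivAt θ (θ' r) r)
    (hform : ∀ r ∈ Ioo 0 R, Fint f (v r) = r ^ 2 / A * (1 + θ r))
    (hθ0 : Tendsto θ (𝓝[>] 0) (𝓝 0)) (hθ'0 : Tendsto (fun r => r * θ' r) (𝓝[>] 0) (𝓝 0)) :
    Tendsto (radialFlux n v v') (𝓝[>] 0) (𝓝 0) := by
  have hcont : ContinuousOn f (Ioi 0) := fun x hx => (hf x hx).continuousAt.continuousWithinAt
  have hc := tendsto_rpow_mul_of_Fint_comp_eq (m := (n - 2) / 2) (by linarith) hp.le hInt hf hpos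
    hM hbound hA hR hvpos hform hθ0
  have hv0 : Tendsto (fun r => r ^ ((n - 2) / 2) * v r) (𝓝[>] 0) (𝓝 0) := by
    have h := (hc.sub ((tendsto_rpow_nhdsGT_zero (by linarith : 0 < (n - 2) / 2)).const_mul
      (f M * Fint f M - p * M))).div_const p
    rw [mul_zero, sub_zero, zero_div] at h
    refine h.congr fun r => ?_
    field_simp
    ring
  have hv'0 : Tendsto (fun r => r ^ (n / 2) * v' r) (𝓝[>] 0) (𝓝 0) := by
    refine squeeze_zero_norm' ?_ (by simpa using hc.const_mul 8)
    filter_upwards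
      [eventually_abs_deriv_mul_le hInt hcont hpos hA hR hv hvpos hθ' hform hθ0 hθ'0,
      (tendsto_atTop_of_Fint_comp_eq hInt hpos hR hvpos hform hθ0).eventually_ge_atTop M,
      self_mem_nhdsWithin] with r hv'r hvr hr
    have hm : 0 ≤ r ^ ((n - 2) / 2) := Real.rpow_nonneg (le_of_lt hr) _
    calc ‖r ^ (n / 2) * v' r‖ = r ^ ((n - 2) / 2) * (|v' r| * r) := by
          rw [Real.norm_eq_abs, abs_mul, abs_of_nonneg (Real.rpow_nonneg (le_of_lt hr) _),
            show n / 2 = (n - 2) / 2 + 1 by ring, Real.rpow_add_one (ne_of_gt hr)]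
          ring
      _ ≤ r ^ ((n - 2) / 2) * (8 * (f M * Fint f M + p * (v r - M))) :=
          mul_le_mul_of_nonneg_left
            (hv'r.trans (by linarith [mul_Fint_le hInt hf hpos hM hbound hvr])) hm
      _ = 8 * (r ^ ((n - 2) / 2) * (f M * Fint f M + p * (v r - M))) := by ring
  show Tendsto (fun r => r ^ (n / 2) * v' r + (n - 2) / 2 * r ^ ((n - 2) / 2) * v r) _ _
  simpa [mul_assoc] using hv'0.add (hv0.const_mul ((n - 2) / 2))

end SingularSubsolution

theorem tendsto_nhdsGT_of_continuousOn_Icc {g : ℝ → ℝ} {R : ℝ} (hR : 0 < R)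
    (hg : ContinuousOn g (Icc 0 R)) : Tendsto g (𝓝[>] 0) (𝓝 (g 0)) :=
  (hg 0 (left_mem_Icc.2 hR.le)).tendsto.mono_left
    (nhdsWithin_le_of_mem (mem_of_superset (Ioo_mem_nhdsGT hR) Ioo_subset_Icc_self))

namespace IsRegularSolutionWithFirstZero

variable {N : ℕ} {f u : ℝ → ℝ} {R : ℝ}

theorem nonneg_s4 (h : IsRegularSolutionWithFirstZero N f u R) {r : ℝ} (hr : r ∈ Icc 0 R) :
    0 ≤ u r := by
  obtain ⟨-, hpos, hzero, -⟩ := h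
  rcases hr.2.lt_or_eq with hlt | rfl
  · exact (hpos r hr.1 hlt).le
  · exact hzero.ge

theorem exists_derivs (hN : 2 < (N : ℝ)) (h : IsRegularSolutionWithFirstZero N f u R) :
    ∃ u' u'' : ℝ → ℝ, ContinuousOn u (Icc 0 R) ∧ (∀ r ∈ Ioo 0 R, HasDerivAt u (u' r) r) ∧
      (∀ r ∈ Ioo 0 R, HasDerivAt u' (u'' r) r) ∧
      (∀ r ∈ Ioo 0 R, u'' r + ((N : ℝ) - 1) / r * u' r + f (u r) = 0) ∧
      Tendsto (radialFlux N u u') (𝓝[>] 0) (𝓝 0) := by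
  obtain ⟨hR, -, -, u', u'', hu, hu', -, -, heq⟩ := h
  have hnhds : ∀ r ∈ Ioo 0 R, Icc 0 R ∈ 𝓝 r := fun r hr => Icc_mem_nhds hr.1 hr.2
  have huc : ContinuousOn u (Icc 0 R) := fun r hr => (hu r hr).continuousWithinAt
  have hu'c : ContinuousOn u' (Icc 0 R) := fun r hr => (hu' r hr).continuousWithinAt
  exact ⟨u', u'', huc, fun r hr => (hu r (Ioo_subset_Icc_self hr)).hasDerivAt (hnhds r hr),
    fun r hr => (hu' r (Ioo_subset_Icc_self hr)).hasDerivAt (hnhds r hr), heq,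
    tendsto_radialFlux_of_tendsto hN (tendsto_nhdsGT_of_continuousOn_Icc hR huc)
      (tendsto_nhdsGT_of_continuousOn_Icc hR hu'c)⟩

end IsRegularSolutionWithFirstZero

section Comparison

variable {N : ℕ} {f f' : ℝ → ℝ}

theorem first_zero_lt_and_lt_of_singular_subsolution {v v' v'' u : ℝ → ℝ} {R Ru : ℝ}
    (hN : 2 < (N : ℝ)) (hf : ∀ x, 0 < x → HasDerivAt f (f' x) x) (hf' : MonotoneOn f' (Ioi 0))
    (hR : 0 < R) (hvc : ContinuousOn v (Ioc 0 R)) (hv : ∀ r ∈ Ioo 0 R, HasDerivAt v (v' r) r)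
    (hv' : ∀ r ∈ Ioo 0 R, HasDerivAt v' (v'' r) r) (hvR : v R = 0)
    (hsub : ∀ r ∈ Ioo 0 R, 0 ≤ v'' r + ((N : ℝ) - 1) / r * v' r + f (v r))
    (hstab : ∀ r ∈ Ioo 0 R, f' (v r) ≤ ((N : ℝ) - 2) ^ 2 / (4 * r ^ 2))
    (hvtop : Tendsto v (𝓝[>] 0) atTop) (hflux : Tendsto (radialFlux N v v') (𝓝[>] 0) (𝓝 0))
    (hu : IsRegularSolutionWithFirstZero N f u Ru) :
    Ru < R ∧ ∀ r ∈ Ioc 0 Ru, u r < v r := by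
  obtain ⟨u', u'', huc, hud, hud', hueq, hufl⟩ := hu.exists_derivs hN
  have hbR : Ioo 0 (min Ru R) ⊆ Ioo 0 R := Ioo_subset_Ioo_right (min_le_right _ _)
  have hbRu : Ioo 0 (min Ru R) ⊆ Ioo 0 Ru := Ioo_subset_Ioo_right (min_le_left _ _)
  have hlt := lt_on_Ioc_of_subsolution_of_solution (n := N) hf hf'
    (hvc.mono (Ioc_subset_Ioc_right (min_le_right _ _)))
    (huc.mono (Ioc_subset_Icc_self.trans (Icc_subset_Icc_right (min_le_left _ _))))
    (fun r hr => hv r (hbR hr)) (fun r hr => hv' r (hbR hr))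
    (fun r hr => hud r (hbRu hr)) (fun r hr => hud' r (hbRu hr))
    (fun r hr => hsub r (hbR hr)) (fun r hr => hueq r (hbRu hr))
    (fun r hr => hu.2.1 r hr.1.le (hbRu hr).2) (fun r hr => hstab r (hbR hr))
    (by
      filter_upwards [(tendsto_nhdsGT_of_continuousOn_Icc hu.1 huc).eventually
        (gt_mem_nhds (lt_add_one (u 0))), hvtop.eventually_gt_atTop (u 0 + 1)] with r h₁ h₂
        using h₁.trans h₂)
    (by simpa using (hflux.sub hufl).congr fun r => (radialFlux_sub v v' u u' r).symm)
  have hRu : Ru < R := by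
    by_contra! hle
    have hvR' := hlt R ⟨hR, (min_eq_right hle).ge⟩
    rw [hvR] at hvR'
    exact hvR'.not_ge (hu.nonneg_s4 ⟨hR.le, hle⟩)
  exact ⟨hRu, fun r hr => hlt r ⟨hr.1, hr.2.trans (min_eq_left hRu.le).ge⟩⟩

theorem first_zero_lt_of_stable {u₁ u₂ : ℝ → ℝ} {R₁ R₂ : ℝ}
    (hN : 2 < (N : ℝ)) (hf : ∀ x, 0 < x → HasDerivAt f (f' x) x) (hf' : MonotoneOn f' (Ioi 0))
    (h₁ : IsRegularSolutionWithFirstZero N f u₁ R₁) (h₂ : IsRegularSolutionWithFirstZero N f u₂ R₂)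
    (h₁₂ : u₁ 0 < u₂ 0) (hstab : ∀ r ∈ Ioo 0 R₂, f' (u₂ r) ≤ ((N : ℝ) - 2) ^ 2 / (4 * r ^ 2)) :
    R₁ < R₂ := by
  by_contra! hle
  obtain ⟨u₁', u₁'', hc₁, hd₁, hd₁', heq₁, hfl₁⟩ := h₁.exists_derivs hN
  obtain ⟨u₂', u₂'', hc₂, hd₂, hd₂', heq₂, hfl₂⟩ := h₂.exists_derivs hN
  have hsub : Ioo 0 R₂ ⊆ Ioo 0 R₁ := Ioo_subset_Ioo_right hle
  have hlt := lt_on_Ioc_of_subsolution_of_solution (n := N) hf hf'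
    (hc₂.mono Ioc_subset_Icc_self) (hc₁.mono (Ioc_subset_Icc_self.trans (Icc_subset_Icc_right hle)))
    hd₂ hd₂' (fun r hr => hd₁ r (hsub hr)) (fun r hr => hd₁' r (hsub hr))
    (fun r hr => (heq₂ r hr).ge) (fun r hr => heq₁ r (hsub hr))
    (fun r hr => h₁.2.1 r hr.1.le (hsub hr).2) hstab
    ((tendsto_nhdsGT_of_continuousOn_Icc h₁.1 hc₁).eventually_lt
      (tendsto_nhdsGT_of_continuousOn_Icc h₂.1 hc₂) h₁₂)
    (by simpa using (hfl₂.sub hfl₁).congr fun r => (radialFlux_sub u₂ u₂' u₁ u₁' r).symm)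
    R₂ ⟨h₂.1, le_rfl⟩
  exact (hlt.trans_eq h₂.2.2.1).not_ge (h₁.nonneg_s4 ⟨h₂.1.le, hle⟩)

end Comparison

theorem first_zero_strictly_increasing_of_stable_subsolution_general
    (N : ℕ) (hN : 6 ≤ N) (q : ℝ) (hq : q < (N : ℝ) / 2)
    -- `f ∈ C²([0,∞))` with `f > 0`, `f' > 0`, `f'' > 0` and `F(0) < ∞`
    (f f' f'' : ℝ → ℝ)
    (hf'def : ∀ u : ℝ, 0 ≤ u → HasDerivWithinAt f (f' u) (Set.Ici 0) u)
    (hf''def : ∀ u : ℝ, 0 ≤ u → HasDerivWithinAt f' (f'' u) (Set.Ici 0) u)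
    (hfpos : ∀ u : ℝ, 0 ≤ u → 0 < f u)
    (hf''pos : ∀ u : ℝ, 0 ≤ u → 0 < f'' u)
    (hInt : MeasureTheory.IntegrableOn (fun s => (f s)⁻¹) (Set.Ioi 0))
    -- `q₀ ≤ f'(u) F(u) ≤ q₁` for `u ≥ M`
    (M q₀ q₁ : ℝ)
    (hq₁ : 1 < q₁) (hq₁S : q₁ < ((N : ℝ) + 2) / 4)
    (hbound : ∀ u : ℝ, M ≤ u → q₀ ≤ f' u * Fint f u ∧ f' u * Fint f u ≤ q₁)
    -- the subsolution `v`, positive on `(0,R)` with `v(R) = 0`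
    (R : ℝ) (hR : 0 < R)
    (v v' v'' : ℝ → ℝ)
    (hv' : ∀ r ∈ Set.Ioc (0:ℝ) R, HasDerivWithinAt v (v' r) (Set.Ioc 0 R) r)
    (hv'' : ∀ r ∈ Set.Ioc (0:ℝ) R, HasDerivWithinAt v' (v'' r) (Set.Ioc 0 R) r)
    (hvpos : ∀ r ∈ Set.Ioo (0:ℝ) R, 0 < v r)
    (hvR : v R = 0)
    -- `F(v(r)) = (r²/(2N-4q)) (1 + θ(r))` with `θ ∈ C¹((0,R))`,
    -- `θ(r) → 0` and `r θ'(r) → 0` as `r → 0⁺`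
    (θ θ' : ℝ → ℝ)
    (hθ' : ∀ r ∈ Set.Ioo (0:ℝ) R, HasDerivAt θ (θ' r) r)
    (hform : ∀ r ∈ Set.Ioo (0:ℝ) R,
      Fint f (v r) = r ^ 2 / (2 * (N : ℝ) - 4 * q) * (1 + θ r))
    (hθ0 : Filter.Tendsto θ (nhdsWithin 0 (Set.Ioi 0)) (nhds 0))
    (hθ'0 : Filter.Tendsto (fun r => r * θ' r) (nhdsWithin 0 (Set.Ioi 0)) (nhds 0))
    -- subsolution and stability inequalities
    (hsub : ∀ r ∈ Set.Ioc (0:ℝ) R, 0 ≤ v'' r + ((N : ℝ) - 1) / r * v' r + f (v r))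
    (hstab : ∀ r ∈ Set.Ioc (0:ℝ) R, f' (v r) ≤ ((N : ℝ) - 2) ^ 2 / (4 * r ^ 2)) :
    ∀ v₁ v₂ R₁ R₂, IsRegularSolutionWithFirstZero N f v₁ R₁ →
      IsRegularSolutionWithFirstZero N f v₂ R₂ → v₁ 0 < v₂ 0 → R₁ < R₂ := by
  intro v₁ v₂ R₁ R₂ h₁ h₂ h₁₂
  have hN' : 2 < (N : ℝ) := by exact_mod_cast (by omega : 2 < N)
  have hpos : ∀ u, 0 < u → 0 < f u := fun u hu => hfpos u hu.le
  have hf : ∀ u, 0 < u → HasDerivAt f (f' u) u := fun u hu =>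
    (hf'def u hu.le).hasDerivAt (Ici_mem_nhds hu)
  have hf' : MonotoneOn f' (Ioi 0) := monotoneOn_of_hasDerivWithinAt_nonneg (convex_Ioi 0)
    (fun u hu => (hf''def u (le_of_lt hu)).continuousWithinAt.mono Ioi_subset_Ici_self)
    (by rw [interior_Ioi]; exact fun u hu => (hf''def u (le_of_lt hu)).mono Ioi_subset_Ici_self)
    (by rw [interior_Ioi]; exact fun u hu => (hf''pos u (le_of_lt hu)).le)
  have hvd : ∀ r ∈ Ioo 0 R, HasDerivAt v (v' r) r := fun r hr =>
    (hv' r (Ioo_subset_Ioc_self hr)).hasDerivAt (Ioc_mem_nhds hr.1 hr.2)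
  have hvd' : ∀ r ∈ Ioo 0 R, HasDerivAt v' (v'' r) r := fun r hr =>
    (hv'' r (Ioo_subset_Ioc_self hr)).hasDerivAt (Ioc_mem_nhds hr.1 hr.2)
  have hflux := tendsto_radialFlux_of_Fint_comp_eq (n := N) (p := q₁ - 1) (by linarith)
    (by linarith) hInt hf hpos (lt_max_of_lt_right one_pos)
    (fun u hu => by linarith [(hbound u ((le_max_left M 1).trans hu)).2]) (by linarith) hR hvd
    hvpos hθ' hform hθ0 hθ'0
  obtain ⟨hR₂, hv₂v⟩ := first_zero_lt_and_lt_of_singular_subsolution hN' hf hf' hR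
    (fun r hr => (hv' r hr).continuousWithinAt) hvd hvd' hvR
    (fun r hr => hsub r (Ioo_subset_Ioc_self hr)) (fun r hr => hstab r (Ioo_subset_Ioc_self hr))
    (tendsto_atTop_of_Fint_comp_eq hInt hpos hR hvpos hform hθ0) hflux h₂
  refine first_zero_lt_of_stable hN' hf hf' h₁ h₂ h₁₂ fun r hr => ?_
  -- `v₂ < v` and `f'` is nondecreasing, so `v₂` inherits the stability of `v`
  exact (hf' (h₂.2.1 r hr.1.le hr.2) (hvpos r ⟨hr.1, hr.2.trans hR₂⟩)
    (hv₂v r ⟨hr.1, hr.2.le⟩).le).trans (hstab r ⟨hr.1, (hr.2.trans hR₂).le⟩)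

/-- Existence of a stable singular subsolution of the prescribed asymptotic
form implies that the first zero of the regular solution is strictly
increasing in the initial value (Type II bifurcation). -/
theorem first_zero_strictly_increasing_of_stable_subsolution
    (N : ℕ) (hN : 6 ≤ N) (q : ℝ) (hq : q < (N : ℝ) / 2)
    -- `f ∈ C²([0,∞))` with `f > 0`, `f' > 0`, `f'' > 0` and `F(0) < ∞`
    (f f' f'' : ℝ → ℝ)
    (hf'def : ∀ u : ℝ, 0 ≤ u → HasDerivWithinAt f (f' u) (Set.Ici 0) u)
    (hf''def : ∀ u : ℝ, 0 ≤ u → HasDerivWithinAt f' (f'' u) (Set.Ici 0) u)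
    (hf''cont : ContinuousOn f'' (Set.Ici 0))
    (hfpos : ∀ u : ℝ, 0 ≤ u → 0 < f u)
    (hf'pos : ∀ u : ℝ, 0 ≤ u → 0 < f' u)
    (hf''pos : ∀ u : ℝ, 0 ≤ u → 0 < f'' u)
    (hInt : MeasureTheory.IntegrableOn (fun s => (f s)⁻¹) (Set.Ioi 0))
    -- `q₀ ≤ f'(u) F(u) ≤ q₁` for `u ≥ M`
    (M q₀ q₁ : ℝ) (hM : 0 ≤ M)
    (hq₀ : 1 / 2 < q₀) (hq₀1 : q₀ < 1) (hq₁ : 1 < q₁) (hq₁S : q₁ < ((N : ℝ) + 2) / 4)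
    (hbound : ∀ u : ℝ, M ≤ u → q₀ ≤ f' u * Fint f u ∧ f' u * Fint f u ≤ q₁)
    -- the subsolution `v`, positive on `(0,R)` with `v(R) = 0`
    (R : ℝ) (hR : 0 < R)
    (v v' v'' : ℝ → ℝ)
    (hv' : ∀ r ∈ Set.Ioc (0:ℝ) R, HasDerivWithinAt v (v' r) (Set.Ioc 0 R) r)
    (hv'' : ∀ r ∈ Set.Ioc (0:ℝ) R, HasDerivWithinAt v' (v'' r) (Set.Ioc 0 R) r)
    (hv''cont : ContinuousOn v'' (Set.Ioc 0 R))
    (hvpos : ∀ r ∈ Set.Ioo (0:ℝ) R, 0 < v r)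
    (hvR : v R = 0)
    -- `F(v(r)) = (r²/(2N-4q)) (1 + θ(r))` with `θ ∈ C¹((0,R))`,
    -- `θ(r) → 0` and `r θ'(r) → 0` as `r → 0⁺`
    (θ θ' : ℝ → ℝ)
    (hθ' : ∀ r ∈ Set.Ioo (0:ℝ) R, HasDerivAt θ (θ' r) r)
    (hθ'cont : ContinuousOn θ' (Set.Ioo 0 R))
    (hform : ∀ r ∈ Set.Ioo (0:ℝ) R,
      Fint f (v r) = r ^ 2 / (2 * (N : ℝ) - 4 * q) * (1 + θ r))
    (hθ0 : Filter.Tendsto θ (nhdsWithin 0 (Set.Ioi 0)) (nhds 0))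
    (hθ'0 : Filter.Tendsto (fun r => r * θ' r) (nhdsWithin 0 (Set.Ioi 0)) (nhds 0))
    -- subsolution and stability inequalities
    (hsub : ∀ r ∈ Set.Ioc (0:ℝ) R, 0 ≤ v'' r + ((N : ℝ) - 1) / r * v' r + f (v r))
    (hstab : ∀ r ∈ Set.Ioc (0:ℝ) R, f' (v r) ≤ ((N : ℝ) - 2) ^ 2 / (4 * r ^ 2)) :
    ∀ v₁ v₂ R₁ R₂, IsRegularSolutionWithFirstZero N f v₁ R₁ →
      IsRegularSolutionWithFirstZero N f v₂ R₂ → v₁ 0 < v₂ 0 → R₁ < R₂ :=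
  first_zero_strictly_increasing_of_stable_subsolution_general N hN q hq f f' f'' hf'def hf''def
    hfpos hf''pos hInt M q₀ q₁ hq₁ hq₁S hbound R hR v v' v'' hv' hv'' hvpos hvR θ θ' hθ' hform hθ0
    hθ'0 hsub hstab
end

section
/- Let f ∈ C²([0,∞)) with f > 0, f' > 0, f'' > 0 and F(0) < ∞. Let r₀ > 0, set t₀ = −log r₀, let v ∈ C²((0,r₀]) be positive, let x ∈ C²([t₀,∞)), and suppose F(v(r)) = (r²/16)·e^{−x(−log r)} for all 0 < r ≤ r₀. Then v''(r) + (9/r)·v'(r) + f(v(r)) ≥ 0 for all 0 < r ≤ r₀ if and only if x''(t) − 8·x'(t) + 16·(e^{x(t)} − 1) − (1 − f'(v(e^{−t}))·F(v(e^{−t})))·(x'(t) + 2)² ≥ 0 for all t ≥ t₀. (This is the generalized Emden transformation in dimension N = 10 with parameter q = 1, where 2N − 4q = 16.) -/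
open Set Real MeasureTheory

theorem hasDerivAt_integral_Ioi {g : ℝ → ℝ} {a u : ℝ} (hg : IntegrableOn g (Ioi a))
    (hcont : ContinuousOn g (Ioi a)) (hu : a < u) :
    HasDerivAt (fun w => ∫ s in Ioi w, g s) (-g u) u := by
  have hsplit : ∀ w ∈ Ioi a, ∫ s in Ioi w, g s = (∫ s in Ioi a, g s) - ∫ s in a..w, g s := by
    intro w (hw : a < w)
    rw [intervalIntegral.integral_of_le hw.le, ← Ioc_union_Ioi_eq_Ioi hw.le,
      setIntegral_union (Ioc_disjoint_Ioi le_rfl) measurableSet_Ioi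
        (hg.mono_set Ioc_subset_Ioi_self) (hg.mono_set (Ioi_subset_Ioi hw.le))]
    ring
  have hint : IntervalIntegrable g volume a u :=
    (intervalIntegrable_iff_integrableOn_Ioc_of_le hu.le).2 (hg.mono_set Ioc_subset_Ioi_self)
  have hFTC : HasDerivAt (fun w => ∫ s in a..w, g s) (g u) u :=
    intervalIntegral.integral_hasDerivAt_right hint
      (hcont.stronglyMeasurableAtFilter isOpen_Ioi u hu) (hcont.continuousAt (Ioi_mem_nhds hu))
  exact (hFTC.const_sub _).congr_of_eventuallyEq
    (Filter.eventually_of_mem (Ioi_mem_nhds hu) hsplit)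

theorem hasDerivWithinAt_comp_neg_log {y : ℝ → ℝ} {y' t₀ r : ℝ} {s : Set ℝ}
    (hy : HasDerivWithinAt y y' (Ici t₀) (-log r)) (hs : MapsTo (fun p => -log p) s (Ici t₀))
    (hr : r ≠ 0) : HasDerivWithinAt (fun p => y (-log p)) (-(y' / r)) s r := by
  have := hy.comp r (hasDerivAt_log hr).neg.hasDerivWithinAt hs
  rwa [div_eq_mul_inv, ← mul_neg]

theorem mapsTo_neg_log_Ioc (r₀ : ℝ) : MapsTo (fun p => -log p) (Ioc 0 r₀) (Ici (-log r₀)) :=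
  fun _ hp => neg_le_neg (log_le_log hp.1 hp.2)

theorem exp_neg_mem_Ioc {r₀ t : ℝ} (hr₀ : 0 < r₀) (ht : -log r₀ ≤ t) : exp (-t) ∈ Ioc 0 r₀ :=
  ⟨exp_pos _, by simpa [exp_log hr₀] using exp_le_exp.2 (neg_le.1 ht)⟩

theorem forall_mem_Ioc_iff_forall_exp_neg {r₀ : ℝ} (hr₀ : 0 < r₀) {P : ℝ → Prop} :
    (∀ r ∈ Ioc 0 r₀, P r) ↔ ∀ t, -log r₀ ≤ t → P (exp (-t)) := by
  refine ⟨fun h t ht => h _ (exp_neg_mem_Ioc hr₀ ht), fun h r hr => ?_⟩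
  simpa [exp_log hr.1] using h (-log r) (mapsTo_neg_log_Ioc r₀ hr)

section EmdenTransformation

variable {F f f' v v' v'' x x' x'' : ℝ → ℝ} {r₀ r : ℝ}

theorem emden_deriv_eq (hF : HasDerivAt F (-(f (v r))⁻¹) (v r)) (hf : f (v r) ≠ 0)
    (hv' : HasDerivWithinAt v (v' r) (Ioc 0 r₀) r)
    (hx' : HasDerivWithinAt x (x' (-log r)) (Ici (-log r₀)) (-log r))
    (hrel : ∀ p ∈ Ioc 0 r₀, F (v p) = p ^ 2 / 16 * exp (-x (-log p))) (hr : r ∈ Ioc 0 r₀) :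
    v' r = -(f (v r) * exp (-x (-log r)) * (r / 16) * (2 + x' (-log r))) := by
  have hlhs : HasDerivWithinAt (fun p => p ^ 2 / 16 * exp (-x (-log p)))
      (-(f (v r))⁻¹ * v' r) (Ioc 0 r₀) r :=
    (hF.comp_hasDerivWithinAt r hv').congr (fun p hp => (hrel p hp).symm) (hrel r hr).symm
  have hrhs : HasDerivWithinAt (fun p => p ^ 2 / 16 * exp (-x (-log p)))
      (r / 8 * exp (-x (-log r)) + r ^ 2 / 16 * (exp (-x (-log r)) * (x' (-log r) / r)))
      (Ioc 0 r₀) r := by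
    refine (((hasDerivAt_pow 2 r).div_const 16).hasDerivWithinAt.mul
      (hasDerivWithinAt_comp_neg_log hx' (mapsTo_neg_log_Ioc r₀) hr.1.ne').neg.exp).congr_deriv ?_
    simp only [Pi.neg_apply]
    push_cast
    ring
  have h := (uniqueDiffOn_Ioc 0 r₀ r hr).eq_deriv _ hlhs hrhs
  rw [neg_mul, neg_eq_iff_eq_neg, inv_mul_eq_iff_eq_mul₀ hf] at h
  rw [h]
  field_simp
  ring

theorem emden_identity
    (hv'eq : ∀ p ∈ Ioc 0 r₀, v' p = -(f (v p) * exp (-x (-log p)) * (p / 16) * (2 + x' (-log p))))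
    (hfv : HasDerivWithinAt (fun p => f (v p)) (f' (v r) * v' r) (Ioc 0 r₀) r)
    (hv'' : HasDerivWithinAt v' (v'' r) (Ioc 0 r₀) r)
    (hx' : HasDerivWithinAt x (x' (-log r)) (Ici (-log r₀)) (-log r))
    (hx'' : HasDerivWithinAt x' (x'' (-log r)) (Ici (-log r₀)) (-log r))
    (hrel : F (v r) = r ^ 2 / 16 * exp (-x (-log r))) (hr : r ∈ Ioc 0 r₀) :
    v'' r + 9 / r * v' r + f (v r) = f (v r) * exp (-x (-log r)) / 16 *
      (x'' (-log r) - 8 * x' (-log r) + 16 * (exp (x (-log r)) - 1)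
        - (1 - f' (v r) * F (v r)) * (x' (-log r) + 2) ^ 2) := by
  have hlog := mapsTo_neg_log_Ioc r₀
  have hr0 : r ≠ 0 := hr.1.ne'
  have hformula := ((((hfv.mul (hasDerivWithinAt_comp_neg_log hx' hlog hr0).neg.exp).mul
    ((hasDerivAt_id r).div_const 16).hasDerivWithinAt).mul
    ((hasDerivWithinAt_comp_neg_log hx'' hlog hr0).const_add 2)).neg).congr hv'eq (hv'eq r hr)
  rw [(uniqueDiffOn_Ioc 0 r₀ r hr).eq_deriv _ hv'' hformula, hv'eq r hr, hrel, exp_neg]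
  simp only [Pi.neg_apply, Pi.mul_apply, id, exp_neg]
  field_simp
  ring

end EmdenTransformation

theorem emden_transformation_subsolution_iff_general
    (f f' : ℝ → ℝ)
    (hf'def : ∀ u : ℝ, 0 ≤ u → HasDerivWithinAt f (f' u) (Set.Ici 0) u)
    (hfpos : ∀ u : ℝ, 0 ≤ u → 0 < f u)
    (hInt : MeasureTheory.IntegrableOn (fun s => (f s)⁻¹) (Set.Ioi 0))
    (r₀ : ℝ) (hr₀ : 0 < r₀) (t₀ : ℝ) (ht₀ : t₀ = -Real.log r₀)
    -- `v ∈ C²((0,r₀])` positive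
    (v v' v'' : ℝ → ℝ)
    (hv' : ∀ r ∈ Set.Ioc (0:ℝ) r₀, HasDerivWithinAt v (v' r) (Set.Ioc 0 r₀) r)
    (hv'' : ∀ r ∈ Set.Ioc (0:ℝ) r₀, HasDerivWithinAt v' (v'' r) (Set.Ioc 0 r₀) r)
    (hvpos : ∀ r ∈ Set.Ioc (0:ℝ) r₀, 0 < v r)
    -- `x ∈ C²([t₀,∞))`
    (x x' x'' : ℝ → ℝ)
    (hx' : ∀ t : ℝ, t₀ ≤ t → HasDerivWithinAt x (x' t) (Set.Ici t₀) t)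
    (hx'' : ∀ t : ℝ, t₀ ≤ t → HasDerivWithinAt x' (x'' t) (Set.Ici t₀) t)
    -- `F(v(r)) = (r²/16) e^{-x(-log r)}` for `0 < r ≤ r₀`
    (hrel : ∀ r ∈ Set.Ioc (0:ℝ) r₀,
      Fint f (v r) = r ^ 2 / 16 * Real.exp (-(x (-Real.log r)))) :
    (∀ r ∈ Set.Ioc (0:ℝ) r₀, 0 ≤ v'' r + 9 / r * v' r + f (v r)) ↔
    (∀ t : ℝ, t₀ ≤ t →
      0 ≤ x'' t - 8 * x' t + 16 * (Real.exp (x t) - 1)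
          - (1 - f' (v (Real.exp (-t))) * Fint f (v (Real.exp (-t)))) * (x' t + 2) ^ 2) := by
  subst ht₀
  have hlog := mapsTo_neg_log_Ioc r₀
  have hinv_cont : ContinuousOn (fun s => (f s)⁻¹) (Ioi 0) :=
    ContinuousOn.inv₀ (fun u hu => (hf'def u hu.le).continuousWithinAt.mono Ioi_subset_Ici_self)
      fun u hu => (hfpos u hu.le).ne'
  have hv'eq : ∀ r ∈ Ioc 0 r₀,
      v' r = -(f (v r) * exp (-x (-log r)) * (r / 16) * (2 + x' (-log r))) := fun r hr =>
    emden_deriv_eq (hasDerivAt_integral_Ioi hInt hinv_cont (hvpos r hr))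
      (hfpos _ (hvpos r hr).le).ne' (hv' r hr) (hx' _ (hlog hr)) hrel hr
  rw [forall_mem_Ioc_iff_forall_exp_neg hr₀]
  refine forall₂_congr fun t ht => ?_
  have hr := exp_neg_mem_Ioc hr₀ ht
  have hfv := (hf'def _ (hvpos _ hr).le).comp _ (hv' _ hr) fun p hp => (hvpos p hp).le
  rw [emden_identity hv'eq hfv (hv'' _ hr) (hx' _ (hlog hr)) (hx'' _ (hlog hr)) (hrel _ hr) hr,
    log_exp, neg_neg]
  have hf_pos := hfpos _ (hvpos _ hr).le
  exact mul_nonneg_iff_of_pos_left (by positivity)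

/-- Generalized Emden transformation in dimension `N = 10` with `q = 1`
(so `2N - 4q = 16`): if `F(v(r)) = (r²/16) e^{-x(-log r)}`, then `v` is a
subsolution on `(0,r₀]` iff the transformed inequality holds for `t ≥ t₀`. -/
theorem emden_transformation_subsolution_iff
    (f f' f'' : ℝ → ℝ)
    (hf'def : ∀ u : ℝ, 0 ≤ u → HasDerivWithinAt f (f' u) (Set.Ici 0) u)
    (hf''def : ∀ u : ℝ, 0 ≤ u → HasDerivWithinAt f' (f'' u) (Set.Ici 0) u)
    (hf''cont : ContinuousOn f'' (Set.Ici 0))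
    (hfpos : ∀ u : ℝ, 0 ≤ u → 0 < f u)
    (hf'pos : ∀ u : ℝ, 0 ≤ u → 0 < f' u)
    (hf''pos : ∀ u : ℝ, 0 ≤ u → 0 < f'' u)
    (hInt : MeasureTheory.IntegrableOn (fun s => (f s)⁻¹) (Set.Ioi 0))
    (r₀ : ℝ) (hr₀ : 0 < r₀) (t₀ : ℝ) (ht₀ : t₀ = -Real.log r₀)
    -- `v ∈ C²((0,r₀])` positive
    (v v' v'' : ℝ → ℝ)
    (hv' : ∀ r ∈ Set.Ioc (0:ℝ) r₀, HasDerivWithinAt v (v' r) (Set.Ioc 0 r₀) r)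
    (hv'' : ∀ r ∈ Set.Ioc (0:ℝ) r₀, HasDerivWithinAt v' (v'' r) (Set.Ioc 0 r₀) r)
    (hv''cont : ContinuousOn v'' (Set.Ioc 0 r₀))
    (hvpos : ∀ r ∈ Set.Ioc (0:ℝ) r₀, 0 < v r)
    -- `x ∈ C²([t₀,∞))`
    (x x' x'' : ℝ → ℝ)
    (hx' : ∀ t : ℝ, t₀ ≤ t → HasDerivWithinAt x (x' t) (Set.Ici t₀) t)
    (hx'' : ∀ t : ℝ, t₀ ≤ t → HasDerivWithinAt x' (x'' t) (Set.Ici t₀) t)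
    (hx''cont : ContinuousOn x'' (Set.Ici t₀))
    -- `F(v(r)) = (r²/16) e^{-x(-log r)}` for `0 < r ≤ r₀`
    (hrel : ∀ r ∈ Set.Ioc (0:ℝ) r₀,
      Fint f (v r) = r ^ 2 / 16 * Real.exp (-(x (-Real.log r)))) :
    (∀ r ∈ Set.Ioc (0:ℝ) r₀, 0 ≤ v'' r + 9 / r * v' r + f (v r)) ↔
    (∀ t : ℝ, t₀ ≤ t →
      0 ≤ x'' t - 8 * x' t + 16 * (Real.exp (x t) - 1)
          - (1 - f' (v (Real.exp (-t))) * Fint f (v (Real.exp (-t)))) * (x' t + 2) ^ 2) :=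
  emden_transformation_subsolution_iff_general f f' hf'def hfpos hInt r₀ hr₀ t₀ ht₀ v v' v'' hv'
    hv'' hvpos x x' x'' hx' hx'' hrel
end

section
/- Let y₀ ∈ ℝ and let h ∈ C¹([y₀,∞)) satisfy h(y) → 0 as y → ∞ and h'(y) < 0 for all y > y₀. Then there exist t₀ ∈ ℝ and a function x ∈ C¹([t₀,∞)) such that: (1) 4·(e^{x(t)} − 1) = h(x(t) + 2t + log 16) for all t ≥ t₀; (2) x(t₀) + 2t₀ + log 16 = y₀; (3) |x(t)| ≤ 1 for all sufficiently large t; (4) −2 < x'(t) < 0 for all t > t₀, so that t ↦ x(t) + 2t + log 16 is strictly increasing on [t₀,∞). -/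
/-!
Put `y = x + 2t + log 16`. For `h ≥ 0` the equation `4(e^x - 1) = h(y)` says `x = log (1 + h(y)/4)`,
i.e. `2t + log 16 = F(y) := y - log (1 + h(y)/4)`. Since `h` decreases to `0` we have `h ≥ 0` and
`h' ≤ 0`, so `F' = 1 - h'/(4 + h) ≥ 1`: `F` is an increasing diffeomorphism, `y = F⁻¹(2t + log 16)`,
and `x' = 2 (1/F'(y) - 1) = 2h'(y)/(4 + h(y) - h'(y)) ∈ (-2, 0)`. To invert `F` on all of `ℝ`,
`h` is first continued to the left of `y₀` by its tangent line, which keeps it `C¹`, nonnegative and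
nonincreasing.
-/

open Real Filter Set Topology

noncomputable def tangentExtension (f f' : ℝ → ℝ) (a y : ℝ) : ℝ :=
  if y < a then f a + f' a * (y - a) else f y

section tangentExtension

variable {f f' : ℝ → ℝ} {a : ℝ}

lemma tangentExtension_of_le {y : ℝ} (hy : a ≤ y) : tangentExtension f f' a y = f y :=
  if_neg hy.not_gt

lemma tendsto_tangentExtension {l : ℝ} (hf : Tendsto f atTop (𝓝 l)) :
    Tendsto (tangentExtension f f' a) atTop (𝓝 l) :=
  hf.congr' <| (eventually_ge_atTop a).mono fun _ hy => (tangentExtension_of_le hy).symm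

lemma hasDerivAt_tangentExtension (hf : ∀ y, a ≤ y → HasDerivWithinAt f (f' y) (Ici a) y)
    (y : ℝ) : HasDerivAt (tangentExtension f f' a) (f' (max a y)) y := by
  have hleft : ∀ z, z ≤ a →
      HasDerivWithinAt (tangentExtension f f' a) (f' a) (Iic a) z := by
    intro z hz
    have hline : HasDerivAt (fun u => f a + f' a * (u - a)) (f' a) z := by
      simpa using ((hasDerivAt_id z).sub_const a).const_mul (f' a) |>.const_add (f a)
    have heq : ∀ u, u ≤ a → tangentExtension f f' a u = f a + f' a * (u - a) := by
      intro u hu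
      rcases hu.lt_or_eq with hu | rfl
      · exact if_pos hu
      · simp [tangentExtension]
    exact hline.hasDerivWithinAt.congr heq (heq z hz)
  have hright : ∀ z, a ≤ z →
      HasDerivWithinAt (tangentExtension f f' a) (f' z) (Ici a) z := fun z hz =>
    (hf z hz).congr (fun u hu => tangentExtension_of_le hu) (tangentExtension_of_le hz)
  rcases lt_trichotomy y a with hy | rfl | hy
  · rw [max_eq_left hy.le]
    exact (hleft y hy.le).hasDerivAt (Iic_mem_nhds hy)
  · rw [max_self]
    simpa using (hleft y le_rfl).union (hright y le_rfl)
  · rw [max_eq_right hy.le]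
    exact (hright y hy.le).hasDerivAt (Ici_mem_nhds hy)

end tangentExtension

lemma nonpos_of_continuousOn_Ici_of_neg {f : ℝ → ℝ} {a y : ℝ} (hf : ContinuousOn f (Ici a))
    (hneg : ∀ z, a < z → f z < 0) (hy : a ≤ y) : f y ≤ 0 := by
  rcases hy.lt_or_eq with hy | rfl
  · exact (hneg y hy).le
  · exact le_of_tendsto ((hf a self_mem_Ici).mono Ioi_subset_Ici_self).tendsto
      (eventually_nhdsWithin_of_forall fun z hz => (hneg z hz).le)

lemma exists_orderIso_of_hasDerivAt_ge {F F' : ℝ → ℝ} {c : ℝ} (hc : 0 < c)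
    (hF : ∀ y, HasDerivAt F (F' y) y) (hF' : ∀ y, c ≤ F' y) : ∃ e : ℝ ≃o ℝ, ⇑e = F := by
  have hmono : StrictMono F := strictMono_of_hasDerivAt_pos hF fun y => hc.trans_le (hF' y)
  have hexcess : Monotone fun y => F y - c * y :=
    monotone_of_hasDerivAt_nonneg (fun y => (hF y).sub ((hasDerivAt_id y).const_mul c))
      fun y => by simpa using hF' y
  have htop : Tendsto F atTop atTop := by
    refine tendsto_atTop_add_left_of_le' _ (F 0) ?_ (tendsto_id.const_mul_atTop hc)
      |>.congr fun y => sub_add_cancel (F y) (c * y)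
    filter_upwards [eventually_ge_atTop 0] with y hy
    simpa using hexcess hy
  have hbot : Tendsto F atBot atBot := by
    refine tendsto_atBot_add_left_of_ge' _ (F 0) ?_ (tendsto_id.const_mul_atBot hc)
      |>.congr fun y => sub_add_cancel (F y) (c * y)
    filter_upwards [eventually_le_atBot 0] with y hy
    simpa using hexcess hy
  have hsurj : Function.Surjective F :=
    (continuous_iff_continuousAt.2 fun y => (hF y).continuousAt).surjective htop hbot
  exact ⟨hmono.orderIsoOfSurjective F hsurj, rfl⟩

noncomputable def implicitMap (H : ℝ → ℝ) (y : ℝ) : ℝ := y - log (1 + H y / 4)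

noncomputable def implicitSlope (H H' : ℝ → ℝ) (y : ℝ) : ℝ := H' y / (4 + H y - H' y)

section implicitMap

variable {H H' : ℝ → ℝ}

lemma hasDerivAt_implicitMap {y : ℝ} (hH : HasDerivAt H (H' y) y) (hH0 : 0 ≤ H y) :
    HasDerivAt (implicitMap H) ((4 + H y - H' y) / (4 + H y)) y := by
  have hlog := ((hH.div_const 4).const_add 1).log (by positivity)
  have hquot : 1 - H' y / 4 / (1 + H y / 4) = (4 + H y - H' y) / (4 + H y) := by
    field_simp
  exact hquot ▸ (hasDerivAt_id' y).sub hlog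

lemma exists_orderIso_eq_implicitMap (hH : ∀ y, HasDerivAt H (H' y) y) (hH0 : ∀ y, 0 ≤ H y)
    (hH' : ∀ y, H' y ≤ 0) : ∃ e : ℝ ≃o ℝ, ⇑e = implicitMap H := by
  refine exists_orderIso_of_hasDerivAt_ge one_pos
    (fun y => hasDerivAt_implicitMap (hH y) (hH0 y)) fun y => ?_
  rw [one_le_div₀ (by linarith [hH0 y])]
  linarith [hH' y]

lemma continuous_implicitSlope (hH : ∀ y, HasDerivAt H (H' y) y) (hH'c : Continuous H')
    (hH0 : ∀ y, 0 ≤ H y) (hH' : ∀ y, H' y ≤ 0) : Continuous (implicitSlope H H') := by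
  have hHc : Continuous H := continuous_iff_continuousAt.2 fun y => (hH y).continuousAt
  refine hH'c.div ((continuous_const.add hHc).sub hH'c) fun y => ?_
  exact (by linarith [hH0 y, hH' y] : (0 : ℝ) < 4 + H y - H' y).ne'

lemma implicitSlope_mem_Ioo {y : ℝ} (hH0 : 0 ≤ H y) (hH' : H' y < 0) :
    implicitSlope H H' y ∈ Ioo (-1) 0 := by
  have hpos : 0 < 4 + H y - H' y := by linarith
  refine ⟨(lt_div_iff₀ hpos).2 ?_, div_neg_of_neg_of_pos hH' hpos⟩
  linarith

variable {e : ℝ ≃o ℝ}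

lemma symm_sub_eq_log (he : ⇑e = implicitMap H) (s : ℝ) :
    e.symm s - s = log (1 + H (e.symm s) / 4) := by
  have hs := congrFun he (e.symm s)
  rw [e.apply_symm_apply, implicitMap] at hs
  linarith

lemma four_mul_exp_symm_sub (he : ⇑e = implicitMap H) (hH0 : ∀ y, 0 ≤ H y) (s : ℝ) :
    4 * (exp (e.symm s - s) - 1) = H (e.symm s) := by
  rw [symm_sub_eq_log he, exp_log (by linarith [hH0 (e.symm s)])]
  ring

lemma hasDerivAt_symm_sub (he : ⇑e = implicitMap H) (hH : ∀ y, HasDerivAt H (H' y) y)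
    (hH0 : ∀ y, 0 ≤ H y) (hH' : ∀ y, H' y ≤ 0) (s : ℝ) :
    HasDerivAt (fun s => e.symm s - s) (implicitSlope H H' (e.symm s)) s := by
  set y := e.symm s
  have hpos : 0 < 4 + H y := by linarith [hH0 y]
  have hpos' : 0 < 4 + H y - H' y := by linarith [hH' y]
  have hsymm : HasDerivAt e.symm ((4 + H y - H' y) / (4 + H y))⁻¹ s :=
    (he ▸ hasDerivAt_implicitMap (hH y) (hH0 y)).of_local_left_inverse
      e.symm.continuous.continuousAt (by positivity) (Eventually.of_forall e.apply_symm_apply)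
  have hval : ((4 + H y - H' y) / (4 + H y))⁻¹ - 1 = implicitSlope H H' y := by
    rw [implicitSlope]
    field_simp
    ring
  exact hval ▸ hsymm.sub (hasDerivAt_id' s)

lemma tendsto_symm_sub (he : ⇑e = implicitMap H) (hlim : Tendsto H atTop (𝓝 0)) :
    Tendsto (fun s => e.symm s - s) atTop (𝓝 0) := by
  have h := (((hlim.comp e.symm.tendsto_atTop).div_const 4).const_add 1).log (by norm_num)
  simp only [zero_div, add_zero, log_one] at h
  exact h.congr fun s => (symm_sub_eq_log he s).symm

end implicitMap

/-- Existence of the implicitly defined function `x` solving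
`4(e^x - 1) = h(x + 2t + log 16)`, defined on `[t₀, ∞)` with
`x(t₀) + 2t₀ + log 16 = y₀`, bounded by `1` for large `t`, and with
`-2 < x' < 0`, so that `t ↦ x(t) + 2t + log 16` is strictly increasing. -/
theorem exists_implicit_solution
    (y₀ : ℝ) (h h' : ℝ → ℝ)
    (hh' : ∀ y : ℝ, y₀ ≤ y → HasDerivWithinAt h (h' y) (Set.Ici y₀) y)
    (hh'cont : ContinuousOn h' (Set.Ici y₀))
    (hlim : Filter.Tendsto h Filter.atTop (nhds 0))
    (hneg : ∀ y : ℝ, y₀ < y → h' y < 0) :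
    ∃ (t₀ : ℝ) (x x' : ℝ → ℝ),
      (∀ t : ℝ, t₀ ≤ t → HasDerivWithinAt x (x' t) (Set.Ici t₀) t) ∧
      ContinuousOn x' (Set.Ici t₀) ∧
      (∀ t : ℝ, t₀ ≤ t → 4 * (Real.exp (x t) - 1) = h (x t + 2 * t + Real.log 16)) ∧
      x t₀ + 2 * t₀ + Real.log 16 = y₀ ∧
      (∀ᶠ t in Filter.atTop, |x t| ≤ 1) ∧
      (∀ t : ℝ, t₀ < t → -2 < x' t ∧ x' t < 0) ∧
      StrictMonoOn (fun t => x t + 2 * t + Real.log 16) (Set.Ici t₀) := by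
  set H := tangentExtension h h' y₀
  set H' := fun y => h' (max y₀ y)
  have hH : ∀ y, HasDerivAt H (H' y) y := hasDerivAt_tangentExtension hh'
  have hHh : ∀ y, y₀ ≤ y → H y = h y := fun _ => tangentExtension_of_le
  have hH'c : Continuous H' := hh'cont.comp_continuous (by fun_prop) (le_max_left y₀)
  have hH'nonpos : ∀ y, H' y ≤ 0 := fun y =>
    nonpos_of_continuousOn_Ici_of_neg (f := h') hh'cont hneg (le_max_left y₀ y)
  have hHlim : Tendsto H atTop (𝓝 0) := tendsto_tangentExtension hlim
  have hH0 : ∀ y, 0 ≤ H y := (antitone_of_hasDerivAt_nonpos hH hH'nonpos).le_of_tendsto hHlim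
  obtain ⟨e, he⟩ := exists_orderIso_eq_implicitMap hH hH0 hH'nonpos
  set s : ℝ → ℝ := fun t => 2 * t + log 16
  have hs : ∀ t, HasDerivAt s 2 t := fun t => by
    simpa only [mul_one] using ((hasDerivAt_id' t).const_mul (2 : ℝ)).add_const (log 16)
  set Y : ℝ → ℝ := fun t => e.symm (s t)
  have hY_mono : StrictMono Y :=
    e.symm.strictMono.comp ((strictMono_mul_left_of_pos two_pos).add_const _)
  set t₀ := (e y₀ - log 16) / 2
  have hs_t₀ : s t₀ = e y₀ := by simp only [s, t₀]; ring
  have hY_t₀ : Y t₀ = y₀ := (congrArg e.symm hs_t₀).trans (e.symm_apply_apply y₀)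
  set x : ℝ → ℝ := fun t => Y t - s t
  have hxY : ∀ t, x t + 2 * t + log 16 = Y t := fun t => by simp only [x, s]; ring
  refine ⟨t₀, x, fun t => implicitSlope H H' (Y t) * 2,
    fun t _ => ((hasDerivAt_symm_sub he hH hH0 hH'nonpos _).comp t (hs t)).hasDerivWithinAt,
    ?_, fun t ht => ?_, by rw [hxY, hY_t₀], ?_, fun t ht => ?_, ?_⟩
  · exact ((continuous_implicitSlope hH hH'c hH0 hH'nonpos).comp
      (e.symm.continuous.comp (by fun_prop))).mul continuous_const |>.continuousOn
  · rw [hxY, ← hHh _ (hY_t₀ ▸ hY_mono.monotone ht)]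
    exact four_mul_exp_symm_sub he hH0 _
  · have hs_top : Tendsto s atTop atTop :=
      tendsto_atTop_add_const_right _ _ (tendsto_id.const_mul_atTop two_pos)
    exact ((tendsto_symm_sub he hHlim).comp hs_top).eventually
      (Icc_mem_nhds (by norm_num) (by norm_num)) |>.mono fun t ht => abs_le.2 ht
  · have hY_gt : y₀ < Y t := hY_t₀ ▸ hY_mono ht
    obtain ⟨hlow, hhigh⟩ := implicitSlope_mem_Ioo (H' := H') (hH0 (Y t))
      (by simpa [H', hY_gt.le] using hneg _ hY_gt)
    constructor <;> linarith
  · simpa only [hxY] using hY_mono.strictMonoOn (Ici t₀)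
end

section
/- Let g satisfy condition (g) and set f = e^g. Then ∫₀^∞ ds/f(s) < ∞ (so F(u) = ∫_u^∞ ds/f(s) is finite for every u ≥ 0), and moreover lim_{u→∞} f'(u)·F(u) = 1 and lim_{u→∞} f'(u)²/(f(u)·f''(u)) = 1. -/
open Set Filter MeasureTheory Topology Real

lemma hasDerivAt_dIci {φ : ℝ → ℝ} (hφ : DifferentiableOn ℝ φ (Ici 0)) {u : ℝ} (hu : 0 < u) :
    HasDerivAt φ (dIci φ u) u := by
  rw [dIci, derivWithin_of_mem_nhds (Ici_mem_nhds hu)]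
  exact (hφ.differentiableAt (Ici_mem_nhds hu)).hasDerivAt

lemma dIci_eq_of_hasDerivAt {φ : ℝ → ℝ} {a u : ℝ} (hu : 0 < u) (h : HasDerivAt φ a u) :
    dIci φ u = a := by
  rw [dIci, derivWithin_of_mem_nhds (Ici_mem_nhds hu), h.deriv]

lemma monotoneOn_Ici_of_hasDerivAt_nonneg {φ φ' : ℝ → ℝ} {a : ℝ} (hc : ContinuousOn φ (Ici a))
    (hd : ∀ x, a < x → HasDerivAt φ (φ' x) x) (hnn : ∀ x, a < x → 0 ≤ φ' x) :
    MonotoneOn φ (Ici a) :=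
  monotoneOn_of_hasDerivWithinAt_nonneg (convex_Ici a) hc
    (fun x hx ↦ (hd x (by simpa using hx)).hasDerivWithinAt) (fun x hx ↦ hnn x (by simpa using hx))

lemma antitoneOn_Ici_of_hasDerivAt_nonpos {φ φ' : ℝ → ℝ} {a : ℝ} (hc : ContinuousOn φ (Ici a))
    (hd : ∀ x, a < x → HasDerivAt φ (φ' x) x) (hnp : ∀ x, a < x → φ' x ≤ 0) :
    AntitoneOn φ (Ici a) :=
  antitoneOn_of_hasDerivWithinAt_nonpos (convex_Ici a) hc
    (fun x hx ↦ (hd x (by simpa using hx)).hasDerivWithinAt) (fun x hx ↦ hnp x (by simpa using hx))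

lemma dIci_exp_comp {φ : ℝ → ℝ} (hφ : DifferentiableOn ℝ φ (Ici 0)) {u : ℝ} (hu : 0 < u) :
    dIci (fun s ↦ exp (φ s)) u = exp (φ u) * dIci φ u :=
  dIci_eq_of_hasDerivAt hu (hasDerivAt_dIci hφ hu).exp

lemma dIci_dIci_exp_comp {φ : ℝ → ℝ} (hφ : DifferentiableOn ℝ φ (Ici 0))
    (hφ' : DifferentiableOn ℝ (dIci φ) (Ici 0)) {u : ℝ} (hu : 0 < u) :
    dIci (dIci fun s ↦ exp (φ s)) u = exp (φ u) * (dIci φ u ^ 2 + dIci (dIci φ) u) := by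
  have hEq : dIci (fun s ↦ exp (φ s)) =ᶠ[𝓝 u] fun s ↦ exp (φ s) * dIci φ s := by
    filter_upwards [Ioi_mem_nhds hu] with s hs using dIci_exp_comp hφ hs
  rw [dIci_eq_of_hasDerivAt hu (((hasDerivAt_dIci hφ hu).exp.mul
    (hasDerivAt_dIci hφ' hu)).congr_of_eventuallyEq hEq)]
  ring

noncomputable def dIciRatio (g : ℝ → ℝ) (u : ℝ) : ℝ := dIci (dIci g) u / dIci g u ^ 2

noncomputable def tailApprox (g : ℝ → ℝ) (u : ℝ) : ℝ := exp (-g u) / dIci g u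

namespace ConditionG

variable {g : ℝ → ℝ}

lemma dIci_pos (hg : ConditionG g) {u : ℝ} (hu : 0 ≤ u) : 0 < dIci g u := (hg.2 u hu).1

lemma dIci_dIci_pos (hg : ConditionG g) {u : ℝ} (hu : 0 ≤ u) : 0 < dIci (dIci g) u :=
  (hg.2 u hu).2.1

lemma contDiffOn_dIci (hg : ConditionG g) : ContDiffOn ℝ 2 (dIci g) (Ici 0) :=
  hg.1.derivWithin (uniqueDiffOn_Ici 0) (by norm_num)

lemma contDiffOn_dIci_dIci (hg : ConditionG g) : ContDiffOn ℝ 1 (dIci (dIci g)) (Ici 0) :=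
  hg.contDiffOn_dIci.derivWithin (uniqueDiffOn_Ici 0) (by norm_num)

lemma differentiableOn (hg : ConditionG g) : DifferentiableOn ℝ g (Ici 0) :=
  hg.1.differentiableOn (by norm_num)

lemma differentiableOn_dIci (hg : ConditionG g) : DifferentiableOn ℝ (dIci g) (Ici 0) :=
  hg.contDiffOn_dIci.differentiableOn (by norm_num)

lemma differentiableOn_dIci_dIci (hg : ConditionG g) : DifferentiableOn ℝ (dIci (dIci g)) (Ici 0) :=
  hg.contDiffOn_dIci_dIci.differentiableOn one_ne_zero

lemma monotoneOn_dIci (hg : ConditionG g) : MonotoneOn (dIci g) (Ici 0) :=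
  monotoneOn_Ici_of_hasDerivAt_nonneg hg.contDiffOn_dIci.continuousOn
    (fun _ hx ↦ hasDerivAt_dIci hg.differentiableOn_dIci hx)
    (fun _ hx ↦ (hg.dIci_dIci_pos hx.le).le)

lemma add_dIci_zero_mul_le (hg : ConditionG g) {u : ℝ} (hu : 0 ≤ u) : g 0 + dIci g 0 * u ≤ g u := by
  have hmono : MonotoneOn (fun v ↦ g v - dIci g 0 * v) (Ici 0) :=
    monotoneOn_Ici_of_hasDerivAt_nonneg
      (hg.1.continuousOn.sub (continuousOn_const.mul continuousOn_id))
      (fun _ hx ↦ (hasDerivAt_dIci hg.differentiableOn hx).sub ((hasDerivAt_id _).const_mul _))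
      (fun x hx ↦ by simpa using hg.monotoneOn_dIci self_mem_Ici (mem_Ici.2 hx.le) hx.le)
  have := hmono self_mem_Ici (mem_Ici.2 hu) hu
  simp only [mul_zero, sub_zero] at this
  linarith

lemma tendsto_atTop (hg : ConditionG g) : Tendsto g atTop atTop :=
  tendsto_atTop_mono' atTop (eventually_ge_atTop 0 |>.mono fun _ hu ↦ hg.add_dIci_zero_mul_le hu)
    (tendsto_atTop_add_const_left _ _ (tendsto_id.const_mul_atTop (hg.dIci_pos le_rfl)))

lemma dIciRatio_pos (hg : ConditionG g) {u : ℝ} (hu : 0 ≤ u) : 0 < dIciRatio g u :=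
  div_pos (hg.dIci_dIci_pos hu) (pow_pos (hg.dIci_pos hu) 2)

lemma continuousOn_dIciRatio (hg : ConditionG g) : ContinuousOn (dIciRatio g) (Ici 0) :=
  hg.contDiffOn_dIci_dIci.continuousOn.div (hg.contDiffOn_dIci.continuousOn.pow 2)
    fun _ hx ↦ (pow_pos (hg.dIci_pos hx) 2).ne'

lemma hasDerivAt_inv_dIci (hg : ConditionG g) {x : ℝ} (hx : 0 < x) :
    HasDerivAt (fun s ↦ (dIci g s)⁻¹) (-dIciRatio g x) x := by
  refine ((hasDerivAt_dIci hg.differentiableOn_dIci hx).fun_inv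
    (hg.dIci_pos hx.le).ne').congr_deriv ?_
  rw [dIciRatio, neg_div]

lemma antitoneOn_dIciRatio (hg : ConditionG g) : AntitoneOn (dIciRatio g) (Ici 0) := by
  refine antitoneOn_Ici_of_hasDerivAt_nonpos hg.continuousOn_dIciRatio (fun x hx ↦
    (hasDerivAt_dIci hg.differentiableOn_dIci_dIci hx).div
      ((hasDerivAt_dIci hg.differentiableOn_dIci hx).pow 2)
      (pow_pos (hg.dIci_pos hx.le) 2).ne') fun x hx ↦ ?_
  have h1 := hg.dIci_pos hx.le
  have hkey := (hg.2 x hx.le).2.2.2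
  apply div_nonpos_of_nonpos_of_nonneg _ (by positivity)
  simp only [Nat.cast_ofNat, Nat.add_one_sub_one, pow_one]
  nlinarith [mul_pos h1 hkey]

lemma exists_dIciRatio_lt (hg : ConditionG g) {ε : ℝ} (hε : 0 < ε) :
    ∃ u, 0 ≤ u ∧ dIciRatio g u < ε := by
  by_contra! hge
  have hanti : AntitoneOn (fun v ↦ (dIci g v)⁻¹ + ε * v) (Ici 0) :=
    antitoneOn_Ici_of_hasDerivAt_nonpos
      ((hg.contDiffOn_dIci.continuousOn.inv₀ fun _ hx ↦ (hg.dIci_pos hx).ne').add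
        (continuousOn_const.mul continuousOn_id))
      (fun _ hx ↦ (hg.hasDerivAt_inv_dIci hx).add ((hasDerivAt_id _).const_mul ε))
      (fun x hx ↦ by simpa using hge x hx.le)
  set u := (dIci g 0)⁻¹ / ε
  have hu : 0 ≤ u := by have := hg.dIci_pos le_rfl; positivity
  have hle := hanti self_mem_Ici (mem_Ici.2 hu) hu
  have hεu : ε * u = (dIci g 0)⁻¹ := mul_div_cancel₀ _ hε.ne'
  have := inv_pos.2 (hg.dIci_pos hu)
  simp only [mul_zero, add_zero] at hle
  linarith

lemma tendsto_dIciRatio (hg : ConditionG g) : Tendsto (dIciRatio g) atTop (𝓝 0) := by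
  refine tendsto_order.2 ⟨fun a ha ↦ ?_, fun ε hε ↦ ?_⟩
  · filter_upwards [eventually_ge_atTop 0] with u hu using ha.trans (hg.dIciRatio_pos hu)
  · obtain ⟨u₀, hu₀, hlt⟩ := hg.exists_dIciRatio_lt hε
    filter_upwards [eventually_ge_atTop u₀] with u hu
    exact (hg.antitoneOn_dIciRatio hu₀ (hu₀.trans hu) hu).trans_lt hlt

lemma continuousOn_exp_neg (hg : ConditionG g) : ContinuousOn (fun s ↦ exp (-g s)) (Ici 0) :=
  continuous_exp.comp_continuousOn hg.1.continuousOn.neg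

lemma tailApprox_pos (hg : ConditionG g) {u : ℝ} (hu : 0 ≤ u) : 0 < tailApprox g u :=
  div_pos (exp_pos _) (hg.dIci_pos hu)

lemma continuousOn_tailApprox (hg : ConditionG g) : ContinuousOn (tailApprox g) (Ici 0) :=
  hg.continuousOn_exp_neg.div hg.contDiffOn_dIci.continuousOn fun _ hx ↦ (hg.dIci_pos hx).ne'

lemma hasDerivAt_tailApprox (hg : ConditionG g) {x : ℝ} (hx : 0 < x) :
    HasDerivAt (tailApprox g) (-(exp (-g x) * (1 + dIciRatio g x))) x := by
  have h1 := hg.dIci_pos hx.le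
  refine (((hasDerivAt_dIci hg.differentiableOn hx).fun_neg.exp).fun_div
    (hasDerivAt_dIci hg.differentiableOn_dIci hx) h1.ne').congr_deriv ?_
  rw [dIciRatio]
  field_simp
  ring

lemma tendsto_tailApprox (hg : ConditionG g) : Tendsto (tailApprox g) atTop (𝓝 0) := by
  have hexp : Tendsto (fun u ↦ exp (-g u) / dIci g 0) atTop (𝓝 0) := by
    simpa using (tendsto_exp_atBot.comp (tendsto_neg_atTop_atBot.comp hg.tendsto_atTop)).div_const
      (dIci g 0)
  refine tendsto_of_tendsto_of_tendsto_of_le_of_le' tendsto_const_nhds hexp ?_ ?_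
  · filter_upwards [eventually_ge_atTop 0] with u hu
    exact (hg.tailApprox_pos hu).le
  · filter_upwards [eventually_ge_atTop 0] with u hu
    exact div_le_div_of_nonneg_left (exp_pos _).le (hg.dIci_pos le_rfl)
      (hg.monotoneOn_dIci self_mem_Ici (mem_Ici.2 hu) hu)

lemma integrableOn_exp_neg_mul_one_add_dIciRatio (hg : ConditionG g) {a : ℝ} (ha : 0 ≤ a) :
    IntegrableOn (fun s ↦ exp (-g s) * (1 + dIciRatio g s)) (Ioi a) := by
  refine (integrableOn_Ioi_deriv_of_nonpos ((hg.continuousOn_tailApprox a ha).mono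
    (Ici_subset_Ici.2 ha)) (fun x hx ↦ hg.hasDerivAt_tailApprox (ha.trans_lt hx))
    (fun x hx ↦ ?_) hg.tendsto_tailApprox).neg.congr_fun (fun x _ ↦ neg_neg _) measurableSet_Ioi
  have := hg.dIciRatio_pos (ha.trans hx.out.le)
  simp only [neg_nonpos]
  positivity

lemma integral_exp_neg_mul_one_add_dIciRatio (hg : ConditionG g) {a : ℝ} (ha : 0 ≤ a) :
    ∫ s in Ioi a, exp (-g s) * (1 + dIciRatio g s) = tailApprox g a := by
  have h := integral_Ioi_of_hasDerivAt_of_tendsto ((hg.continuousOn_tailApprox a ha).mono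
    (Ici_subset_Ici.2 ha)) (fun x hx ↦ hg.hasDerivAt_tailApprox (ha.trans_lt hx))
    (hg.integrableOn_exp_neg_mul_one_add_dIciRatio ha).neg hg.tendsto_tailApprox
  rw [integral_neg] at h
  linarith

lemma integrableOn_exp_neg (hg : ConditionG g) {a : ℝ} (ha : 0 ≤ a) :
    IntegrableOn (fun s ↦ exp (-g s)) (Ioi a) := by
  refine (hg.integrableOn_exp_neg_mul_one_add_dIciRatio ha).mono'
    ((hg.continuousOn_exp_neg.mono (Ioi_subset_Ici ha)).aestronglyMeasurable measurableSet_Ioi) ?_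
  filter_upwards [ae_restrict_mem measurableSet_Ioi] with s hs
  have := hg.dIciRatio_pos (ha.trans hs.out.le)
  rw [norm_of_nonneg (exp_pos _).le]
  exact le_mul_of_one_le_right (exp_pos _).le (by linarith)

lemma integral_exp_neg_le_tailApprox (hg : ConditionG g) {a : ℝ} (ha : 0 ≤ a) :
    ∫ s in Ioi a, exp (-g s) ≤ tailApprox g a := by
  rw [← hg.integral_exp_neg_mul_one_add_dIciRatio ha]
  refine setIntegral_mono_on (hg.integrableOn_exp_neg ha)
    (hg.integrableOn_exp_neg_mul_one_add_dIciRatio ha) measurableSet_Ioi fun s hs ↦ ?_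
  have := hg.dIciRatio_pos (ha.trans hs.out.le)
  exact le_mul_of_one_le_right (exp_pos _).le (by linarith)

lemma tailApprox_le_mul_integral_exp_neg (hg : ConditionG g) {a : ℝ} (ha : 0 ≤ a) :
    tailApprox g a ≤ (1 + dIciRatio g a) * ∫ s in Ioi a, exp (-g s) := by
  rw [← hg.integral_exp_neg_mul_one_add_dIciRatio ha, ← integral_const_mul]
  refine setIntegral_mono_on (hg.integrableOn_exp_neg_mul_one_add_dIciRatio ha)
    ((hg.integrableOn_exp_neg ha).const_mul _) measurableSet_Ioi fun s hs ↦ ?_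
  rw [mul_comm]
  gcongr
  exact hg.antitoneOn_dIciRatio ha (ha.trans hs.out.le) hs.out.le

lemma tendsto_inv_one_add_dIciRatio (hg : ConditionG g) :
    Tendsto (fun u ↦ (1 + dIciRatio g u)⁻¹) atTop (𝓝 1) := by
  have h := (hg.tendsto_dIciRatio.const_add 1).inv₀ (by norm_num : (1 : ℝ) + 0 ≠ 0)
  rwa [add_zero, inv_one] at h

lemma tendsto_exp_mul_dIci_mul_integral_exp_neg (hg : ConditionG g) :
    Tendsto (fun u ↦ exp (g u) * dIci g u * ∫ s in Ioi u, exp (-g s)) atTop (𝓝 1) := by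
  have hval : ∀ u, 0 ≤ u → exp (g u) * dIci g u * ∫ s in Ioi u, exp (-g s) =
      (∫ s in Ioi u, exp (-g s)) / tailApprox g u := by
    intro u hu
    have := hg.dIci_pos hu
    rw [tailApprox, exp_neg]
    field_simp
  refine tendsto_of_tendsto_of_tendsto_of_le_of_le' hg.tendsto_inv_one_add_dIciRatio
    tendsto_const_nhds ?_ ?_
  · filter_upwards [eventually_ge_atTop 0] with u hu
    have := hg.dIciRatio_pos hu
    rw [hval u hu, le_div_iff₀ (hg.tailApprox_pos hu), inv_mul_le_iff₀ (by linarith)]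
    exact hg.tailApprox_le_mul_integral_exp_neg hu
  · filter_upwards [eventually_ge_atTop 0] with u hu
    rw [hval u hu]
    exact div_le_one_of_le₀ (hg.integral_exp_neg_le_tailApprox hu) (hg.tailApprox_pos hu).le

lemma tendsto_sq_div_sq_add (hg : ConditionG g) :
    Tendsto (fun u ↦ dIci g u ^ 2 / (dIci g u ^ 2 + dIci (dIci g) u)) atTop (𝓝 1) := by
  refine hg.tendsto_inv_one_add_dIciRatio.congr' ?_
  filter_upwards [eventually_ge_atTop 0] with u hu
  have := hg.dIci_pos hu
  rw [dIciRatio]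
  field_simp

end ConditionG

/-- If `g` satisfies condition (g) and `f = e^g`, then `1/f` is integrable on
`(0,∞)`, and `f'(u) F(u) → 1` and `f'(u)² / (f(u) f''(u)) → 1` as `u → ∞`. -/
theorem limits_of_exp_g
    (g : ℝ → ℝ) (hg : ConditionG g)
    (f : ℝ → ℝ) (hf : ∀ u : ℝ, f u = Real.exp (g u)) :
    MeasureTheory.IntegrableOn (fun s => (f s)⁻¹) (Set.Ioi 0) ∧
    Filter.Tendsto (fun u => dIci f u * Fint f u) Filter.atTop (nhds 1) ∧
    Filter.Tendsto (fun u => (dIci f u) ^ 2 / (f u * dIci (dIci f) u))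
      Filter.atTop (nhds 1) := by
  obtain rfl : f = fun s ↦ exp (g s) := funext hf
  have hinv : (fun s ↦ (exp (g s))⁻¹) = fun s ↦ exp (-g s) := funext fun s ↦ (exp_neg _).symm
  refine ⟨hinv ▸ hg.integrableOn_exp_neg le_rfl, ?_, ?_⟩
  · refine hg.tendsto_exp_mul_dIci_mul_integral_exp_neg.congr' ?_
    filter_upwards [eventually_gt_atTop 0] with u hu
    rw [dIci_exp_comp hg.differentiableOn hu, Fint, hinv]
  · refine hg.tendsto_sq_div_sq_add.congr' ?_
    filter_upwards [eventually_gt_atTop 0] with u hu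
    rw [dIci_exp_comp hg.differentiableOn hu,
      dIci_dIci_exp_comp hg.differentiableOn hg.differentiableOn_dIci hu]
    field_simp
end

section
/- Let g ∈ C³([0,∞)) satisfy g'(u) > 0, g''(u) > 0, and 2·g''(u)² − g'(u)·g'''(u) > 0 for all u ≥ 0. Then the function u ↦ g''(u)/g'(u)² is strictly decreasing on [0,∞) and g''(u)/g'(u)² → 0 as u → ∞. -/
/-!
Put `p = g'` and `h = g''/g'²`. The quotient rule gives `h' = -(2 g''² - g' g''')/g'³ < 0`, so `h`
is strictly decreasing. Moreover `h = -(1/p)'`, so for `u > 0` the mean value inequality and the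
monotonicity of `h` give `u h(u) ≤ 1/p(0) - 1/p(u) < 1/p(0)`. Since `h > 0`, this squeezes `h(u)`
between `0` and `1/(p(0) u)`.
-/

open Set Filter Topology

lemma hasDerivAt_dIci_s9 {f : ℝ → ℝ} (hf : DifferentiableOn ℝ f (Ici 0)) {x : ℝ} (hx : 0 < x) :
    HasDerivAt f (dIci f x) x :=
  (hf x hx.le).hasDerivWithinAt.hasDerivAt (Ici_mem_nhds hx)

section

variable {p q r : ℝ → ℝ} {a : ℝ}

lemma strictAntiOn_div_sq (hp : ContinuousOn p (Ici a)) (hq : ContinuousOn q (Ici a))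
    (hpq : ∀ x, a < x → HasDerivAt p (q x) x) (hqr : ∀ x, a < x → HasDerivAt q (r x) x)
    (hp_pos : ∀ x, a ≤ x → 0 < p x) (hpqr : ∀ x, a ≤ x → 0 < 2 * q x ^ 2 - p x * r x) :
    StrictAntiOn (fun x => q x / p x ^ 2) (Ici a) := by
  refine strictAntiOn_of_deriv_neg (convex_Ici a)
    (hq.div (hp.pow 2) fun x hx => pow_ne_zero 2 (hp_pos x hx).ne') fun x hx => ?_
  rw [interior_Ici] at hx
  have hpx := hp_pos x hx.le
  have hderiv : HasDerivAt (fun x => q x / p x ^ 2)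
      ((r x * p x ^ 2 - q x * (2 * p x ^ 1 * q x)) / (p x ^ 2) ^ 2) x :=
    (hqr x hx).div ((hpq x hx).pow 2) (pow_ne_zero 2 hpx.ne')
  have hnum : r x * p x ^ 2 - q x * (2 * p x ^ 1 * q x) = -(p x * (2 * q x ^ 2 - p x * r x)) := by
    ring
  rw [hderiv.deriv, hnum]
  exact div_neg_of_neg_of_pos (neg_neg_of_pos (mul_pos hpx (hpqr x hx.le)))
    (by positivity)

/-- The mean value inequality for `1 / p`, whose derivative `-q / p²` is monotone. -/
lemma sub_mul_div_sq_lt_inv (hp : ContinuousOn p (Ici a))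
    (hpq : ∀ x, a < x → HasDerivAt p (q x) x) (hp_pos : ∀ x, a ≤ x → 0 < p x)
    (hanti : AntitoneOn (fun x => q x / p x ^ 2) (Ici a)) {u : ℝ} (hu : a < u) :
    (u - a) * (q u / p u ^ 2) < (p a)⁻¹ := by
  have hinv : ∀ x, a < x → HasDerivAt (fun y => (p y)⁻¹) (-(q x) / p x ^ 2) x := fun x hx =>
    (hpq x hx).inv (hp_pos x hx.le).ne'
  have hmvt : (p u)⁻¹ - (p a)⁻¹ ≤ -(q u / p u ^ 2) * (u - a) := by
    refine (convex_Icc a u).image_sub_le_mul_sub_of_deriv_le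
      ((hp.inv₀ fun x hx => (hp_pos x hx).ne').mono Icc_subset_Ici_self) ?_ ?_
      a (left_mem_Icc.2 hu.le) u (right_mem_Icc.2 hu.le) hu.le
    · rw [interior_Icc]
      exact fun x hx => (hinv x hx.1).differentiableAt.differentiableWithinAt
    · rw [interior_Icc]
      intro x hx
      rw [show p⁻¹ = fun y => (p y)⁻¹ from rfl, (hinv x hx.1).deriv, neg_div, neg_le_neg_iff]
      exact hanti hx.1.le hu.le hx.2.le
  have hpu : 0 < (p u)⁻¹ := inv_pos.2 (hp_pos u hu.le)
  linarith

end

lemma tendsto_zero_of_nonneg_of_mul_le {f : ℝ → ℝ} {C : ℝ} (hf : ∀ᶠ u in atTop, 0 ≤ f u)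
    (hC : ∀ᶠ u in atTop, u * f u ≤ C) : Tendsto f atTop (𝓝 0) := by
  refine squeeze_zero' hf ?_ (tendsto_const_nhds (x := C) |>.div_atTop tendsto_id)
  filter_upwards [hC, eventually_gt_atTop 0] with u hu hu_pos
  exact (le_div_iff₀' hu_pos).2 hu

/-- If `g ∈ C³([0,∞))` with `g' > 0`, `g'' > 0` and `2 g''² - g' g''' > 0` on
`[0,∞)`, then `u ↦ g''(u)/g'(u)²` is strictly decreasing on `[0,∞)` and tends
to `0` at infinity. -/
theorem gpp_div_gp_sq_strictAnti_tendsto_zero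
    (g : ℝ → ℝ)
    (hg : ContDiffOn ℝ 3 g (Set.Ici 0))
    (h1 : ∀ u : ℝ, 0 ≤ u → 0 < dIci g u)
    (h2 : ∀ u : ℝ, 0 ≤ u → 0 < dIci (dIci g) u)
    (h3 : ∀ u : ℝ, 0 ≤ u →
      0 < 2 * (dIci (dIci g) u) ^ 2 - dIci g u * dIci (dIci (dIci g)) u) :
    StrictAntiOn (fun u => dIci (dIci g) u / (dIci g u) ^ 2) (Set.Ici 0) ∧
    Filter.Tendsto (fun u => dIci (dIci g) u / (dIci g u) ^ 2)
      Filter.atTop (nhds 0) := by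
  have hp : ContDiffOn ℝ 2 (dIci g) (Ici 0) := hg.derivWithin (uniqueDiffOn_Ici 0) (by norm_num)
  have hq : ContDiffOn ℝ 1 (dIci (dIci g)) (Ici 0) :=
    hp.derivWithin (uniqueDiffOn_Ici 0) (by norm_num)
  have hpq := fun x (hx : (0 : ℝ) < x) => hasDerivAt_dIci_s9 (hp.differentiableOn (by norm_num)) hx
  have hqr := fun x (hx : (0 : ℝ) < x) => hasDerivAt_dIci_s9 (hq.differentiableOn one_ne_zero) hx
  have hanti := strictAntiOn_div_sq hp.continuousOn hq.continuousOn hpq hqr h1 h3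
  refine ⟨hanti, tendsto_zero_of_nonneg_of_mul_le (C := (dIci g 0)⁻¹) ?_ ?_⟩
  · filter_upwards [eventually_ge_atTop 0] with u hu
    exact (div_pos (h2 u hu) (pow_pos (h1 u hu) 2)).le
  · filter_upwards [eventually_gt_atTop 0] with u hu
    simpa only [sub_zero] using
      (sub_mul_div_sq_lt_inv hp.continuousOn hpq h1 hanti.antitoneOn hu).le
end
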